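/- arXiv:2603.02373 — 10 statements merged into one kernel-verified Lean document; each statement's English description precedes it below -/
import Mathlib

section
/- For prime p ≡ 1 (mod 4) with p > 5, the sum ∑_{μ=1}^{p-1} μ² (μ|p) is divisible by p, where (μ|p) is the Legendre symbol. Consequently B₂(χ) := (1/p) ∑_{μ=1}^{p-1} μ² (μ|p) is an integer. -/
/-!
By Euler's criterion `μ ^ k * (μ | p) ≡ μ ^ (k + (p - 1) / 2) (mod p)`, so modulo `p` the sum is a
power sum over all of `𝔽_p`, and `∑_{x ∈ 𝔽_p} x ^ i = 0` whenever `i < p - 1`. For `k = 2` the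
exponent `2 + (p - 1) / 2` is below `p - 1` for odd `p` exactly when `p > 5`.
-/

open Finset

theorem ZMod.sum_univ_eq_sum_range {M : Type*} [AddCommMonoid M] (n : ℕ) [NeZero n]
    (f : ZMod n → M) : ∑ x : ZMod n, f x = ∑ i ∈ range n, f i :=
  sum_nbij' ZMod.val (fun i ↦ (i : ZMod n)) (by simp [ZMod.val_lt]) (by simp)
    (by simp) (fun i hi ↦ ZMod.val_cast_of_lt (mem_range.mp hi)) (by simp)

theorem ZMod.sum_Icc_eq_sum_univ_of_map_zero {M : Type*} [AddCommMonoid M] (n : ℕ) [NeZero n]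
    (f : ZMod n → M) (hf : f 0 = 0) : ∑ i ∈ Icc 1 (n - 1), f i = ∑ x : ZMod n, f x := by
  have hIcc : Icc 1 (n - 1) = (range n).erase 0 := by
    ext i
    simp only [mem_Icc, mem_erase, mem_range]
    have := NeZero.ne n
    omega
  rw [ZMod.sum_univ_eq_sum_range, hIcc, sum_erase _ (by simpa using hf)]

theorem legendreSym.intCast_pow_mul_eq_pow (p : ℕ) [Fact p.Prime] (a : ℤ) (k : ℕ) :
    ((a ^ k * legendreSym p a : ℤ) : ZMod p) = (a : ZMod p) ^ (k + p / 2) := by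
  rw [Int.cast_mul, legendreSym.eq_pow, pow_add]
  push_cast
  rfl

theorem legendreSym.dvd_sum_Icc_pow_mul (p : ℕ) [Fact p.Prime] (k : ℕ) (hk : k + p / 2 < p - 1) :
    (p : ℤ) ∣ ∑ μ ∈ Icc 1 (p - 1), (μ : ℤ) ^ k * legendreSym p μ := by
  have hp : 2 ≤ p := (Fact.out : p.Prime).two_le
  rw [← ZMod.intCast_zmod_eq_zero_iff_dvd, Int.cast_sum]
  simp_rw [legendreSym.intCast_pow_mul_eq_pow, Int.cast_natCast]
  rw [ZMod.sum_Icc_eq_sum_univ_of_map_zero p (fun x ↦ x ^ (k + p / 2))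
    (zero_pow (by omega))]
  exact FiniteField.sum_pow_lt_card_sub_one (ZMod p) (k + p / 2) (by rwa [ZMod.card])

theorem legendre_weighted_square_sum_div_general (p : ℕ) [Fact p.Prime]
    (h5 : 5 < p) :
    (p : ℤ) ∣ ∑ μ ∈ Finset.Icc 1 (p - 1), (μ : ℤ) ^ 2 * legendreSym p μ := by
  have hodd : p % 2 = 1 := Nat.odd_iff.mp ((Fact.out : p.Prime).odd_of_ne_two (by omega))
  exact legendreSym.dvd_sum_Icc_pow_mul p 2 (by omega)

theorem legendre_weighted_square_sum_div (p : ℕ) [Fact p.Prime]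
    (h4 : p % 4 = 1) (h5 : 5 < p) :
    (p : ℤ) ∣ ∑ μ ∈ Finset.Icc 1 (p - 1), (μ : ℤ) ^ 2 * legendreSym p μ :=
  legendre_weighted_square_sum_div_general p h5
end

section
/- For prime p ≡ 1 (mod 8) with p > 5, the integer B₂(χ) = (1/p) ∑_{μ=1}^{p-1} μ² (μ|p) satisfies B₂(χ) ≡ 0 (mod 8), and for p ≡ 5 (mod 8) with p > 5 it satisfies B₂(χ) ≡ 4 (mod 8). -/
/-!
Reduce `p * B = ∑ μ² χ(μ)` modulo 8. There `μ² ≡ 1` for odd `μ`, `μ² ≡ 4` for `μ ≡ 2 (mod 4)` and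
`μ² ≡ 0` for `4 ∣ μ`. Since `χ(-1) = 1`, the reflection `μ ↦ p - μ` exchanges odd and even `μ`, so
the odd terms carry half of `∑ χ(μ) = 0`; and as every `χ(μ)` is odd, the terms with
`μ ≡ 2 (mod 4)` contribute `4 · (p - 1) / 4`. Hence `p * B ≡ p - 1 (mod 8)`.
-/

open Finset

lemma sq_mul_modEq_eight (μ : ℕ) {c : ℤ} (hc : Odd c) :
    (μ : ℤ) ^ 2 * c ≡ (if Odd μ then c else 0) + if μ % 4 = 2 then 4 else 0 [ZMOD 8] := by
  obtain ⟨k, rfl⟩ := hc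
  have hμ : (μ : ℤ) ≡ (μ % 8 : ℕ) [ZMOD 8] := by rw [Int.ModEq]; omega
  have hodd : Odd μ ↔ μ % 8 % 2 = 1 := by rw [Nat.odd_iff]; omega
  simp only [hodd, show μ % 4 = μ % 8 % 4 by omega]
  refine ((hμ.pow 2).mul_right _).trans ?_
  have : μ % 8 < 8 := Nat.mod_lt _ (by norm_num)
  interval_cases μ % 8 <;> simp [Int.ModEq] <;> omega

lemma card_Icc_filter_mod_four_eq_two {n : ℕ} (hn : n % 4 = 0) :
    #{μ ∈ Icc 1 n | μ % 4 = 2} = n / 4 := by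
  have : {μ ∈ Icc 1 n | μ % 4 = 2} = (range (n / 4)).image (fun k => 4 * k + 2) := by
    ext μ
    simp only [mem_filter, mem_Icc, mem_image, mem_range]
    constructor
    · rintro ⟨hμn, hμ⟩
      exact ⟨μ / 4, by omega, by omega⟩
    · rintro ⟨k, hk, rfl⟩
      omega
  rw [this, card_image_of_injective _ (fun a b h => by omega), card_range]

lemma natCast_ne_zero_of_mem_Icc {p μ : ℕ} (hμ : μ ∈ Icc 1 (p - 1)) : (μ : ZMod p) ≠ 0 := by
  rw [mem_Icc] at hμ
  rw [Ne, ZMod.natCast_eq_zero_iff]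
  exact fun h => absurd (Nat.le_of_dvd (by omega) h) (by omega)

section

variable {p : ℕ} [Fact p.Prime]

lemma sum_Icc_legendreSym_eq_zero (hp : p ≠ 2) :
    ∑ μ ∈ Icc 1 (p - 1), legendreSym p μ = 0 :=
  calc ∑ μ ∈ Icc 1 (p - 1), legendreSym p μ
      = ∑ a ∈ univ.erase 0, quadraticChar (ZMod p) a := by
        refine sum_nbij' (fun μ : ℕ => (μ : ZMod p)) ZMod.val (fun μ hμ => ?_) (fun a ha => ?_)
          (fun μ hμ => ?_) (fun a _ => ZMod.natCast_zmod_val a) (fun μ _ => by simp [legendreSym])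
        · simpa using natCast_ne_zero_of_mem_Icc hμ
        · have := ZMod.val_lt a
          have := (ZMod.val_pos (n := p)).2 (ne_of_mem_erase ha)
          simp only [mem_Icc]
          omega
        · exact ZMod.val_cast_of_lt (by simp only [mem_Icc] at hμ; omega)
    _ = ∑ a, quadraticChar (ZMod p) a := sum_erase _ (MulChar.map_zero _)
    _ = 0 := quadraticChar_sum_zero (by rwa [ZMod.ringChar_zmod_n])

lemma legendreSym_sub_eq_of_mod_four_eq_one (hp : p % 4 = 1) (a : ℤ) :
    legendreSym p (p - a) = legendreSym p a := by
  have : ((p - a : ℤ) : ZMod p) = ((-a : ℤ) : ZMod p) := by simp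
  rw [legendreSym, this, ← legendreSym, legendreSym.at_neg (by omega),
    ZMod.χ₄_nat_one_mod_four hp, one_mul]

lemma sum_Icc_filter_odd_legendreSym_eq_zero (hp : p % 4 = 1) :
    ∑ μ ∈ Icc 1 (p - 1) with Odd μ, legendreSym p μ = 0 := by
  have hreflect : ∑ μ ∈ Icc 1 (p - 1) with Odd μ, legendreSym p μ
      = ∑ μ ∈ Icc 1 (p - 1) with ¬Odd μ, legendreSym p μ := by
    refine sum_nbij' (p - ·) (p - ·) ?_ ?_ ?_ ?_ ?_ <;> intro μ hμ <;>
      simp only [mem_filter, mem_Icc, Nat.odd_iff] at hμ ⊢ <;>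
      first | omega | rw [Nat.cast_sub (by omega), legendreSym_sub_eq_of_mod_four_eq_one hp]
  have htotal := sum_filter_add_sum_filter_not (Icc 1 (p - 1)) Odd (fun μ => legendreSym p μ)
  rw [sum_Icc_legendreSym_eq_zero (by omega), ← hreflect] at htotal
  omega

lemma odd_legendreSym {a : ℤ} (ha : (a : ZMod p) ≠ 0) : Odd (legendreSym p a) := by
  rcases legendreSym.eq_one_or_neg_one p ha with h | h <;> simp [h]

lemma sum_Icc_sq_mul_legendreSym_modEq_eight (hp : p % 4 = 1) :
    ∑ μ ∈ Icc 1 (p - 1), (μ : ℤ) ^ 2 * legendreSym p μ ≡ p - 1 [ZMOD 8] :=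
  calc ∑ μ ∈ Icc 1 (p - 1), (μ : ℤ) ^ 2 * legendreSym p μ
      ≡ ∑ μ ∈ Icc 1 (p - 1),
          ((if Odd μ then legendreSym p μ else 0) + if μ % 4 = 2 then 4 else 0) [ZMOD 8] :=
        Int.ModEq.sum fun μ hμ =>
          sq_mul_modEq_eight μ (odd_legendreSym (by simpa using natCast_ne_zero_of_mem_Icc hμ))
    _ = ∑ μ ∈ Icc 1 (p - 1) with Odd μ, legendreSym p μ
          + 4 * #{μ ∈ Icc 1 (p - 1) | μ % 4 = 2} := by
        rw [sum_add_distrib, ← sum_filter, ← sum_filter, sum_const, nsmul_eq_mul, mul_comm]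
    _ = p - 1 := by
        rw [sum_Icc_filter_odd_legendreSym_eq_zero hp, card_Icc_filter_mod_four_eq_two (by omega)]
        omega

end

theorem B2chi_mod_eight_general (p : ℕ) [Fact p.Prime] (B : ℤ)
    (hB : (p : ℤ) * B = ∑ μ ∈ Finset.Icc 1 (p - 1), (μ : ℤ) ^ 2 * legendreSym p μ) :
    (p % 8 = 1 → B % 8 = 0) ∧ (p % 8 = 5 → B % 8 = 4) := by
  have hpB (hp : p % 4 = 1) : (p % 8 : ℕ) * B ≡ p - 1 [ZMOD 8] := by
    have hp8 : (p : ℤ) ≡ (p % 8 : ℕ) [ZMOD 8] := by rw [Int.ModEq]; omega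
    exact (hp8.mul_right B).symm.trans (hB ▸ sum_Icc_sq_mul_legendreSym_modEq_eight hp)
  constructor <;> intro h8 <;> have := hpB (by omega) <;> rw [h8, Int.ModEq] at this <;> omega

theorem B2chi_mod_eight (p : ℕ) [Fact p.Prime] (h5 : 5 < p) (B : ℤ)
    (hB : (p : ℤ) * B = ∑ μ ∈ Finset.Icc 1 (p - 1), (μ : ℤ) ^ 2 * legendreSym p μ) :
    (p % 8 = 1 → B % 8 = 0) ∧ (p % 8 = 5 → B % 8 = 4) :=
  B2chi_mod_eight_general p B hB
end

section
/- For a prime p ≡ 3 (mod 4), the quantity B₂(χ) = (1/p) ∑_{μ=1}^{p-1} μ² (μ|p) is an odd integer. -/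
/-!
Since `p ≡ 3 (mod 4)`, `χ(-1) = -1`, so `χ(p - μ) = -χ(μ)`. Substituting `μ ↦ p - μ` in
`S = ∑ μ² χ(μ)` and using `∑ χ(μ) = 0` gives `2S = 2p ∑ μ χ(μ)`, so `B = ∑ μ χ(μ)`.
As `χ(μ) = ±1` is odd, `B ≡ ∑ μ = p(p-1)/2 (mod 2)`, which is odd for `p ≡ 3 (mod 4)`.
-/

open Finset

theorem ZMod.sum_range_natCast {M : Type*} [AddCommMonoid M] (n : ℕ) [NeZero n] (f : ZMod n → M) :
    ∑ i ∈ range n, f i = ∑ x, f x :=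
  sum_nbij' (↑) ZMod.val (by simp) (by simp [ZMod.val_lt])
    (by simp +contextual [Nat.mod_eq_of_lt]) (by simp) (by simp)

theorem Finset.sum_Ico_one_reflect {M : Type*} [AddCommMonoid M] (f : ℕ → M) (n : ℕ) :
    ∑ j ∈ Ico 1 n, f (n - j) = ∑ j ∈ Ico 1 n, f j := by
  simpa using sum_Ico_reflect f 1 n.le_succ

theorem legendreSym.sum_Ico_eq_zero (p : ℕ) [Fact p.Prime] (hp : p ≠ 2) :
    ∑ j ∈ Ico 1 p, legendreSym p j = 0 := by
  have hsum := quadraticChar_sum_zero (F := ZMod p) (by rwa [ZMod.ringChar_zmod_n])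
  rw [← ZMod.sum_range_natCast, sum_range_eq_add_Ico _ (Fact.out : p.Prime).pos] at hsum
  simpa [legendreSym] using hsum

theorem legendreSym.at_neg_of_mod_four_eq_three {p : ℕ} [Fact p.Prime] (hp : p % 4 = 3) (a : ℤ) :
    legendreSym p (-a) = -legendreSym p a := by
  rw [legendreSym.at_neg (by omega), ZMod.χ₄_nat_three_mod_four hp, neg_one_mul]

theorem legendreSym.odd_of_ne_zero {p : ℕ} [Fact p.Prime] {a : ℤ} (ha : (a : ZMod p) ≠ 0) :
    Odd (legendreSym p a) := by
  rcases legendreSym.eq_one_or_neg_one p ha with h | h <;> simp [h]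

theorem Int.even_sum_mul_sub_sum {ι : Type*} (s : Finset ι) (a b : ι → ℤ)
    (hb : ∀ i ∈ s, Odd (b i)) : Even (∑ i ∈ s, a i * b i - ∑ i ∈ s, a i) := by
  rw [← sum_sub_distrib, even_iff_two_dvd]
  refine dvd_sum fun i hi => ?_
  rw [← mul_sub_one]
  exact ((hb i hi).sub_odd odd_one).two_dvd.mul_left _

theorem Nat.odd_sum_range_id_of_mod_four_eq_three {n : ℕ} (hn : n % 4 = 3) :
    Odd (∑ i ∈ range n, i) := by
  obtain ⟨q, rfl⟩ : ∃ q, n = 4 * q + 3 := ⟨n / 4, by omega⟩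
  have h := sum_range_id_mul_two (4 * q + 3)
  have : ∑ i ∈ range (4 * q + 3), i = (4 * q + 3) * (2 * q + 1) := by
    rw [show 4 * q + 3 - 1 = (2 * q + 1) * 2 by omega, ← mul_assoc] at h
    exact Nat.eq_of_mul_eq_mul_right two_pos h
  rw [this]
  exact (Nat.odd_iff.2 (by omega)).mul (Nat.odd_iff.2 (by omega))

theorem sum_sq_mul_eq_mul_sum_mul_of_reflect_neg {n : ℕ} (χ : ℕ → ℤ)
    (hχ : ∀ j ∈ Ico 1 n, χ (n - j) = -χ j) (hsum : ∑ j ∈ Ico 1 n, χ j = 0) :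
    ∑ j ∈ Ico 1 n, (j : ℤ) ^ 2 * χ j = n * ∑ j ∈ Ico 1 n, (j : ℤ) * χ j := by
  set S := ∑ j ∈ Ico 1 n, (j : ℤ) ^ 2 * χ j
  have hrefl : S = ∑ j ∈ Ico 1 n, -((n : ℤ) - j) ^ 2 * χ j := by
    rw [← sum_Ico_one_reflect]
    refine sum_congr rfl fun j hj => ?_
    rw [hχ j hj, Nat.cast_sub (mem_Ico.1 hj).2.le]
    ring
  have : 2 * S = ∑ j ∈ Ico 1 n, (2 * n * (j * χ j) - n ^ 2 * χ j) := by
    rw [two_mul]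
    nth_rewrite 2 [hrefl]
    rw [← sum_add_distrib]
    exact sum_congr rfl fun j _ => by ring
  rw [sum_sub_distrib, ← mul_sum, ← mul_sum, hsum] at this
  linarith

theorem B2chi_odd_of_three_mod_four (p : ℕ) [Fact p.Prime] (h4 : p % 4 = 3) :
    ∃ B : ℤ, (p : ℤ) * B = ∑ μ ∈ Finset.Icc 1 (p - 1), (μ : ℤ) ^ 2 * legendreSym p μ
      ∧ Odd B := by
  have hIcc : Icc 1 (p - 1) = Ico 1 p := by ext; simp; omega
  have hreflect : ∀ j ∈ Ico 1 p, legendreSym p ↑(p - j) = -legendreSym p j := fun j hj => by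
    rw [Nat.cast_sub (mem_Ico.1 hj).2.le, ← legendreSym.at_neg_of_mod_four_eq_three h4]
    simp [legendreSym]
  have hodd : ∀ j ∈ Ico 1 p, Odd (legendreSym p j) := fun j hj => by
    refine legendreSym.odd_of_ne_zero ?_
    rw [Int.cast_natCast, Ne, ZMod.natCast_eq_zero_iff]
    exact Nat.not_dvd_of_pos_of_lt (mem_Ico.1 hj).1 (mem_Ico.1 hj).2
  rw [hIcc]
  refine ⟨_, (sum_sq_mul_eq_mul_sum_mul_of_reflect_neg _ hreflect
    (legendreSym.sum_Ico_eq_zero p (by omega))).symm, ?_⟩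
  have hid : Odd (∑ j ∈ Ico 1 p, (j : ℤ)) := by
    have := Nat.odd_sum_range_id_of_mod_four_eq_three h4
    rwa [sum_range_eq_add_Ico _ (Fact.out : p.Prime).pos, zero_add, ← Int.odd_coe_nat,
      Nat.cast_sum] at this
  simpa using (Int.even_sum_mul_sub_sum _ (↑) _ hodd).add_odd hid
end

section
/- Let p ≡ 1 (mod 4) be prime, (a,p) = 1, and define S(y) = ∑_{μ=0}^{p-1} ∑_{ν=0}^{p-1} μ χ(ν) ⌊(aμ + ay + ν)/p⌋. If y is a real number such that ay ∉ ℤ, then S(1 − y) = S(y). -/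
/-!
Substituting `μ ↦ p - 1 - μ`, `ν ↦ p - ν` and using `χ(-1) = 1` turns the floor
`⌊(aμ + a(1 - y) + ν)/p⌋` into `a - ⌊(aμ + ay + ν)/p⌋`, the non-integrality of `ay` being
exactly what makes `⌊a(1 - y)⌋ = a - 1 - ⌊ay⌋`. Since `∑ χ = 0`, this leaves
`S(1 - y) - S(y) = -(p - 1) ∑_{μ,ν} χ(ν) ⌊(aμ + ay + ν)/p⌋`. As `μ ↦ aμ` permutes the residues
mod `p`, Hermite's identity gives `∑_μ ⌊(aμ + t)/p⌋ = C + ⌊t⌋` with `C` independent of `t`, so the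
double sum equals `∑_ν ν χ(ν)`, which vanishes because `χ` is even.
-/

open Finset

/-- `S(y) = ∑_{μ,ν mod p} μ χ(ν) ⌊(aμ + ay + ν)/p⌋`. -/
noncomputable def Ssum (p : ℕ) [Fact p.Prime] (a : ℤ) (y : ℝ) : ℤ :=
  ∑ μ ∈ Finset.range p, ∑ ν ∈ Finset.range p,
    (μ : ℤ) * legendreSym p ν * ⌊(((a : ℝ) * μ + a * y + ν) / p)⌋

theorem sum_range_sub_reflect {M : Type*} [AddCancelCommMonoid M] (f : ℕ → M) {n : ℕ}
    (h : f 0 = f n) : ∑ j ∈ range n, f (n - j) = ∑ j ∈ range n, f j := by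
  have hshift : ∑ j ∈ range n, f (j + 1) = ∑ j ∈ range n, f j := by
    apply add_right_cancel (b := f 0)
    rw [← sum_range_succ', sum_range_succ, h]
  rw [← hshift, ← sum_range_reflect]
  refine sum_congr rfl fun j hj => ?_
  rw [mem_range] at hj
  congr 1
  omega

theorem Int.neg_sub_one_ediv {n : ℤ} (hn : 0 < n) (b : ℤ) : (-b - 1) / n = -(b / n) - 1 := by
  rw [Int.ediv_eq_iff_of_pos hn]
  constructor <;> nlinarith [Int.ediv_mul_le b hn.ne', Int.lt_ediv_add_one_mul_self b hn]

theorem Int.floor_intCast_sub_of_notMem {R : Type*} [Ring R] [LinearOrder R] [FloorRing R]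
    [IsOrderedRing R] (m : ℤ) {x : R} (hx : x ∉ Set.range Int.cast) :
    ⌊(m : R) - x⌋ = m - 1 - ⌊x⌋ := by
  rw [sub_eq_add_neg, Int.floor_intCast_add, Int.floor_neg,
    (Int.ceil_eq_floor_add_one_iff_notMem x).mpr hx]
  ring

section Residues

variable {M : Type*} [AddCommMonoid M] {n : ℕ} [NeZero n]

theorem sum_range_eq_sum_zmod_val (f : ℕ → M) :
    ∑ i ∈ range n, f i = ∑ x : ZMod n, f x.val := by
  obtain ⟨k, rfl⟩ := Nat.exists_eq_succ_of_ne_zero (NeZero.ne n)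
  exact (Fin.sum_univ_eq_sum_range f _).symm

theorem sum_range_mul_emod {a : ℤ} (ha : IsCoprime a n) (g : ℤ → M) :
    ∑ μ ∈ range n, g (a * μ % n) = ∑ r ∈ range n, g r := by
  set u := ZMod.unitOfIsCoprime a ha
  have hval (x : ZMod n) : a * (x.val : ℤ) % n = ((u : ZMod n) * x).val := by
    rw [← ZMod.val_intCast, ZMod.coe_unitOfIsCoprime]
    push_cast [ZMod.natCast_zmod_val]
    rfl
  rw [sum_range_eq_sum_zmod_val, sum_range_eq_sum_zmod_val (fun r => g r)]
  simp_rw [hval]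
  exact Equiv.sum_comp (Units.mulLeft u) (fun x => g x.val)

theorem sum_range_add_ediv (m : ℤ) : ∑ r ∈ range n, ((r : ℤ) + m) / n = m := by
  have hn : (0 : ℤ) < n := by have := NeZero.pos n; omega
  set f : ℤ → ℤ := fun m => ∑ r ∈ range n, ((r : ℤ) + m) / n
  have hzero : f 0 = 0 := sum_eq_zero fun r hr => by
    rw [add_zero, Int.ediv_eq_zero_of_lt (by positivity) (by simpa using hr)]
  -- shifting `r ↦ r + 1` trades the term `m / n` for `(n + m) / n = m / n + 1`
  have hsucc (m : ℤ) : f (m + 1) = f m + 1 := by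
    have hlast : ((n : ℕ) + m) / (n : ℤ) = m / n + 1 := by
      rw [add_comm, ← Int.add_mul_ediv_right _ _ hn.ne', one_mul]
    have := sum_range_succ' (fun r => ((r : ℤ) + m) / n) n
    rw [sum_range_succ, hlast] at this
    simp only [f]
    push_cast at this ⊢
    simp only [zero_add, add_assoc, add_comm (1 : ℤ)] at this ⊢
    linarith
  change f m = m
  induction m using Int.induction_on with
  | zero => exact hzero
  | succ i ih => rw [hsucc, ih]
  | pred i ih => have := hsucc (-i - 1); simp only [sub_add_cancel] at this; omega

theorem sum_range_mul_add_ediv {a : ℤ} (ha : IsCoprime a n) (m : ℤ) :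
    ∑ μ ∈ range n, (a * μ + m) / n = ∑ μ ∈ range n, a * μ / n + m := by
  have hn : (n : ℤ) ≠ 0 := by exact_mod_cast NeZero.ne n
  have hsplit (μ : ℕ) : (a * μ + m) / n = a * μ / n + (a * μ % n + m) / n := by
    have hμ : a * μ + m = (a * μ % n + m) + n * (a * μ / n) := by
      linarith [Int.emod_add_mul_ediv (a * μ) n]
    rw [hμ, Int.add_mul_ediv_left _ _ hn, add_comm]
  simp_rw [hsplit, sum_add_distrib, sum_range_mul_emod ha (fun r => (r + m) / (n : ℤ)),
    sum_range_add_ediv]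

end Residues

section Legendre

variable {p : ℕ} [Fact p.Prime]

theorem sum_range_legendreSym (hp : p ≠ 2) : ∑ ν ∈ range p, legendreSym p ν = 0 := by
  rw [sum_range_eq_sum_zmod_val (fun ν => legendreSym p ν)]
  simp only [legendreSym, Int.cast_natCast, ZMod.natCast_zmod_val]
  exact quadraticChar_sum_zero (by rwa [ZMod.ringChar_zmod_n])

theorem legendreSym_sub_left (h4 : p % 4 = 1) (b : ℤ) :
    legendreSym p (p - b) = legendreSym p b := by
  have hp : p ≠ 2 := by rintro rfl; norm_num at h4
  rw [legendreSym.mod, Int.sub_emod, Int.emod_self, zero_sub, ← legendreSym.mod,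
    legendreSym.at_neg hp, ZMod.χ₄_nat_one_mod_four h4, one_mul, ← legendreSym.mod]

theorem sum_range_mul_legendreSym (h4 : p % 4 = 1) :
    ∑ ν ∈ range p, (ν : ℤ) * legendreSym p ν = 0 := by
  have hp : p ≠ 2 := by rintro rfl; norm_num at h4
  have hreflect := sum_range_sub_reflect (n := p) (fun ν => (ν : ℤ) * legendreSym p ν)
    (by simp [legendreSym.eq_zero_iff])
  have hterm : ∀ ν ∈ range p, ((p - ν : ℕ) : ℤ) * legendreSym p (p - ν : ℕ)
      = p * legendreSym p ν - ν * legendreSym p ν := fun ν hν => by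
    rw [Nat.cast_sub (mem_range.mp hν).le, legendreSym_sub_left h4]
    ring
  rw [sum_congr rfl hterm, sum_sub_distrib, ← mul_sum, sum_range_legendreSym hp] at hreflect
  linarith

def legendreFloorSum (p : ℕ) [Fact p.Prime] (b : ℤ) : ℤ :=
  ∑ ν ∈ range p, legendreSym p ν * ((b + ν) / p)

theorem legendreFloorSum_mul_sub_one_sub (h4 : p % 4 = 1) (c b : ℤ) :
    legendreFloorSum p (p * c - 1 - b) = -legendreFloorSum p b := by
  have hp : p ≠ 2 := by rintro rfl; norm_num at h4
  have hp0 : (0 : ℤ) < p := by exact_mod_cast (Fact.out : p.Prime).pos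
  have hterm : ∀ ν ∈ range p, legendreSym p (p - ν : ℕ) * ((p * c - 1 - b + (p - ν : ℕ)) / p)
      = c * legendreSym p ν - legendreSym p ν * ((b + ν) / p) := fun ν hν => by
    have hnum : p * c - 1 - b + (p - ν : ℕ) = (-(b + ν) - 1) + (c + 1) * p := by
      rw [Nat.cast_sub (mem_range.mp hν).le]; ring
    rw [hnum, Int.add_mul_ediv_right _ _ hp0.ne', Int.neg_sub_one_ediv hp0,
      Nat.cast_sub (mem_range.mp hν).le, legendreSym_sub_left h4]
    ring
  unfold legendreFloorSum
  rw [← sum_range_sub_reflect _ (by simp [legendreSym.eq_zero_iff]), sum_congr rfl hterm,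
    sum_sub_distrib, ← mul_sum, sum_range_legendreSym hp, mul_zero, zero_sub]

theorem sum_range_legendreFloorSum_mul_add (h4 : p % 4 = 1) {a : ℤ} (ha : IsCoprime a p)
    (k : ℤ) : ∑ μ ∈ range p, legendreFloorSum p (a * μ + k) = 0 := by
  have hp : p ≠ 2 := by rintro rfl; norm_num at h4
  have hinner (ν : ℕ) : ∑ μ ∈ range p, legendreSym p ν * ((a * μ + k + ν) / p)
      = (∑ μ ∈ range p, a * μ / p + k) * legendreSym p ν + ν * legendreSym p ν := by
    simp_rw [← mul_sum, add_assoc, sum_range_mul_add_ediv ha]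
    ring
  unfold legendreFloorSum
  rw [sum_comm]
  simp_rw [hinner]
  rw [sum_add_distrib, ← mul_sum, sum_range_legendreSym hp, sum_range_mul_legendreSym h4]
  simp

theorem sum_mul_legendreFloorSum_reflect (h4 : p % 4 = 1) {a : ℤ} (ha : IsCoprime a p)
    (k : ℤ) :
    ∑ μ ∈ range p, (μ : ℤ) * legendreFloorSum p (a * μ + (a - 1 - k))
      = ∑ μ ∈ range p, (μ : ℤ) * legendreFloorSum p (a * μ + k) := by
  have hterm : ∀ μ ∈ range p,
      ((p - 1 - μ : ℕ) : ℤ) * legendreFloorSum p (a * (p - 1 - μ : ℕ) + (a - 1 - k))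
      = μ * legendreFloorSum p (a * μ + k) - (p - 1) * legendreFloorSum p (a * μ + k) := by
    intro μ hμ
    have hcast : ((p - 1 - μ : ℕ) : ℤ) = p - 1 - μ := by have := mem_range.mp hμ; omega
    rw [hcast, show a * (p - 1 - μ) + (a - 1 - k) = p * a - 1 - (a * μ + k) by ring,
      legendreFloorSum_mul_sub_one_sub h4]
    ring
  rw [← sum_range_reflect, sum_congr rfl hterm, sum_sub_distrib, ← mul_sum,
    sum_range_legendreFloorSum_mul_add h4 ha, mul_zero, sub_zero]

end Legendre

theorem Ssum_eq_sum_mul_legendreFloorSum (p : ℕ) [Fact p.Prime] (a : ℤ) (y : ℝ) :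
    Ssum p a y = ∑ μ ∈ range p, (μ : ℤ) * legendreFloorSum p (a * μ + ⌊a * y⌋) := by
  have hfloor (μ ν : ℕ) : ⌊((a : ℝ) * μ + a * y + ν) / p⌋ = (a * μ + ⌊a * y⌋ + ν) / p := by
    rw [Int.floor_div_natCast, show (a : ℝ) * μ + a * y + ν = ((a * μ + ν : ℤ) : ℝ) + a * y by
      push_cast; ring, Int.floor_intCast_add]
    ring_nf
  simp_rw [Ssum, legendreFloorSum, mul_sum, hfloor, mul_assoc]

theorem Ssum_one_sub_general (p : ℕ) [Fact p.Prime] (h4 : p % 4 = 1)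
    (a : ℤ) (ha : Int.gcd a p = 1) (y : ℝ) (hy : ¬ ∃ m : ℤ, (m : ℝ) = a * y) :
    Ssum p a (1 - y) = Ssum p a y := by
  have hfloor : ⌊(a : ℝ) * (1 - y)⌋ = a - 1 - ⌊(a : ℝ) * y⌋ := by
    rw [mul_one_sub, Int.floor_intCast_sub_of_notMem a hy]
  rw [Ssum_eq_sum_mul_legendreFloorSum, Ssum_eq_sum_mul_legendreFloorSum, hfloor,
    sum_mul_legendreFloorSum_reflect h4 (Int.isCoprime_iff_gcd_eq_one.mpr ha)]

theorem Ssum_one_sub (p : ℕ) [Fact p.Prime] (h4 : p % 4 = 1) (h5 : p ≠ 5)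
    (a : ℤ) (ha : Int.gcd a p = 1) (y : ℝ) (hy : ¬ ∃ m : ℤ, (m : ℝ) = a * y) :
    Ssum p a (1 - y) = Ssum p a y :=
  Ssum_one_sub_general p h4 a ha y hy
end

section
/- Let p ≡ 1 (mod 4) be prime and (a,p) = 1. Then S(0) = ∑_{μ=0}^{p-1} ∑_{ν=0}^{p-1} μ χ(ν) ⌊(aμ + ν)/p⌋ satisfies S(0) ≡ (χ(a) − 1)/2 (mod 2); i.e., S(0) is even if a is a quadratic residue mod p and odd otherwise. -/
/-!
Modulo 2 the symbol χ(ν) is just the indicator of ν ≠ 0, so Hermite's identity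
∑_{ν<p} ⌊(x + ν)/p⌋ = x turns the inner sum into x − ⌊x/p⌋ with x = aμ. Since μ² ≡ μ and
∑ μ = p(p−1)/2 is even, S(0) ≡ ∑_{μ odd} ⌊aμ/p⌋. Writing μ = p − 2j with 1 ≤ j ≤ (p−1)/2 gives
⌊aμ/p⌋ = a − 1 − ⌊2aj/p⌋, and as (p−1)/2 is even, S(0) ≡ ∑_j ⌊2aj/p⌋. By Gauss's lemma the
latter is ≡ (χ(a) − 1)/2: the parity of ⌊2aj/p⌋ records whether aj mod p exceeds p/2.
-/

open Finset

theorem Int.sum_range_add_ediv {n : ℕ} (hn : 0 < n) (x : ℤ) :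
    ∑ ν ∈ Finset.range n, (x + ν) / n = x := by
  have shift (y : ℤ) :
      ∑ ν ∈ Finset.range n, (y + 1 + ν) / n = ∑ ν ∈ Finset.range n, (y + ν) / n + 1 := by
    have h :=
      (sum_range_succ' (fun ν : ℕ => (y + ν) / (n : ℤ)) n).symm.trans (sum_range_succ _ n)
    have hend : (y + n) / (n : ℤ) = y / n + 1 := by
      simpa using Int.add_mul_ediv_right y 1 (by positivity : (n : ℤ) ≠ 0)
    simp only [Nat.cast_add, Nat.cast_one, Nat.cast_zero, add_zero, hend, ← add_assoc] at h
    simp only [add_right_comm y 1]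
    linarith
  induction x using Int.induction_on with
  | zero =>
    refine sum_eq_zero fun ν hν => Int.ediv_eq_zero_of_lt (by positivity) ?_
    simpa using hν
  | succ i ih => rw [shift, ih]
  | pred i ih =>
    have h := shift (-i - 1)
    rw [sub_add_cancel, ih] at h
    linarith

theorem Int.mul_sub_ediv_of_not_dvd {p y : ℤ} (hp : 0 < p) (hy : ¬ p ∣ y) (a : ℤ) :
    (a * p - y) / p = a - 1 - y / p := by
  rw [sub_eq_neg_add, Int.add_mul_ediv_right _ _ hp.ne', Int.neg_ediv, if_neg hy,
    Int.sign_eq_one_of_pos hp]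
  ring

theorem Int.two_mul_ediv_of_lt {p r : ℤ} (hr₀ : 0 ≤ r) (hrp : r < p) :
    2 * r / p = if p ≤ 2 * r then 1 else 0 := by
  split_ifs with h
  · rw [show 2 * r = 2 * r - p + 1 * p by ring, Int.add_mul_ediv_right _ _ (by omega),
      Int.ediv_eq_zero_of_lt (by omega) (by omega), zero_add]
  · exact Int.ediv_eq_zero_of_lt (by omega) (by omega)

theorem Finset.sum_natCast_zmod_two_mul (s : Finset ℕ) (g : ℕ → ZMod 2) :
    ∑ μ ∈ s, (μ : ZMod 2) * g μ = ∑ μ ∈ s with Odd μ, g μ := by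
  rw [sum_filter]
  refine sum_congr rfl fun μ _ => ?_
  split_ifs with h
  · rw [h.natCast_zmod_two, one_mul]
  · rw [ZMod.natCast_eq_zero_iff_even.mpr (Nat.not_odd_iff_even.mp h), zero_mul]

theorem Finset.sum_range_natCast_zmod_two {n : ℕ} (hn : n % 4 ≤ 1) :
    ∑ μ ∈ range n, (μ : ZMod 2) = 0 := by
  rw [← Nat.cast_sum, ZMod.natCast_eq_zero_iff]
  have h4 : 2 * 2 ∣ n * (n - 1) := by
    rcases (by omega : 4 ∣ n ∨ 4 ∣ n - 1) with h | h
    · exact Dvd.dvd.mul_right h _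
    · exact Dvd.dvd.mul_left h _
  rw [← sum_range_id_mul_two] at h4
  exact Nat.dvd_of_mul_dvd_mul_right two_pos h4

theorem Finset.sum_range_filter_odd {M : Type*} [AddCommMonoid M] {n : ℕ} (hn : Odd n)
    (f : ℕ → M) : ∑ μ ∈ range n with Odd μ, f μ = ∑ j ∈ Icc 1 (n / 2), f (n - 2 * j) := by
  rw [Nat.odd_iff] at hn
  refine (sum_nbij' (fun j => n - 2 * j) (fun μ => (n - μ) / 2) ?_ ?_ ?_ ?_
    fun _ _ => rfl).symm <;> simp only [mem_filter, mem_range, mem_Icc, Nat.odd_iff] <;> omega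

theorem legendreSym.cast_zmod_two (p : ℕ) [Fact p.Prime] (x : ℤ) :
    ((legendreSym p x : ℤ) : ZMod 2) = if (x : ZMod p) = 0 then 0 else 1 := by
  split_ifs with h
  · rw [(legendreSym.eq_zero_iff p x).mpr h, Int.cast_zero]
  · rcases legendreSym.eq_one_or_neg_one p h with h1 | h1 <;> rw [h1] <;> decide

theorem sum_legendreSym_mul_add_ediv_zmod_two (p : ℕ) [Fact p.Prime] (x : ℤ) :
    ((∑ ν ∈ range p, legendreSym p ν * ((x + ν) / p) : ℤ) : ZMod 2) =
      ((x - x / p : ℤ) : ZMod 2) := by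
  have hp : 0 < p := (Fact.out : p.Prime).pos
  have hχ : ∀ ν ∈ range p, ((legendreSym p ν : ℤ) : ZMod 2) = 1 - if ν = 0 then 1 else 0 := by
    intro ν hν
    have hν0 : ((ν : ℤ) : ZMod p) = 0 ↔ ν = 0 := by
      rw [Int.cast_natCast, ZMod.natCast_eq_zero_iff]
      exact ⟨fun h => Nat.eq_zero_of_dvd_of_lt h (mem_range.mp hν), fun h => h ▸ dvd_zero p⟩
    simp only [legendreSym.cast_zmod_two, hν0]
    split_ifs <;> simp
  push_cast
  rw [sum_congr rfl fun ν hν => by rw [hχ ν hν]]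
  simp only [sub_mul, one_mul, ite_mul, zero_mul, sum_sub_distrib, sum_ite_eq', mem_range, hp]
  push_cast [← Int.cast_sum, Int.sum_range_add_ediv hp]
  simp

theorem ZMod.intCast_neg_one_pow_sub_one_div_two (n : ℕ) :
    ((((-1) ^ n - 1) / 2 : ℤ) : ZMod 2) = n := by
  rcases n.even_or_odd with h | h
  · rw [h.neg_one_pow, ZMod.natCast_eq_zero_iff_even.mpr h]; rfl
  · rw [h.neg_one_pow, h.natCast_zmod_two]; rfl

theorem legendreSym.sub_one_div_two_eq_sum_two_mul_ediv (p : ℕ) [Fact p.Prime] (hp : p ≠ 2)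
    {a : ℤ} (ha : (a : ZMod p) ≠ 0) :
    (((legendreSym p a - 1) / 2 : ℤ) : ZMod 2) =
      ∑ j ∈ Icc 1 (p / 2), ((2 * a * j / p : ℤ) : ZMod 2) := by
  have hP : (0 : ℤ) < p := by exact_mod_cast (Fact.out : p.Prime).pos
  have hodd : p % 2 = 1 := Nat.odd_iff.mp ((Fact.out : p.Prime).odd_of_ne_two hp)
  rw [ZMod.gauss_lemma hp ha, ZMod.intCast_neg_one_pow_sub_one_div_two, natCast_card_filter,
    Nat.succ_eq_add_one, Ico_add_one_right_eq_Icc]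
  refine sum_congr rfl fun j _ => ?_
  have hval : (((a * j : ZMod p).val : ℕ) : ℤ) = a * j % p := by
    rw [← ZMod.val_intCast]; push_cast; rfl
  have hsplit : 2 * a * j = 2 * (a * j % p) + a * j / p * 2 * p := by
    linarith [Int.mul_ediv_add_emod (a * j) p]
  rw [hsplit, Int.add_mul_ediv_right _ _ hP.ne',
    Int.two_mul_ediv_of_lt (Int.emod_nonneg _ hP.ne') (Int.emod_lt_of_pos _ hP)]
  have hcmp : p / 2 < (a * j : ZMod p).val ↔ (p : ℤ) ≤ 2 * (a * j % p) := by omega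
  push_cast
  split_ifs <;> simp_all [(by decide : (2 : ZMod 2) = 0)]

theorem sum_Icc_mul_sub_two_mul_ediv_zmod_two (p : ℕ) [Fact p.Prime] (hp4 : p % 4 = 1) {a : ℤ}
    (ha : (a : ZMod p) ≠ 0) :
    ∑ j ∈ Icc 1 (p / 2), ((a * (p - 2 * j : ℕ) / p : ℤ) : ZMod 2) =
      -∑ j ∈ Icc 1 (p / 2), ((2 * a * j / p : ℤ) : ZMod 2) := by
  have hP : (0 : ℤ) < p := by exact_mod_cast (Fact.out : p.Prime).pos
  have hne {m : ℕ} (h₀ : 0 < m) (h₁ : m < p) : (m : ZMod p) ≠ 0 := by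
    rw [Ne, ZMod.natCast_eq_zero_iff]
    exact Nat.not_dvd_of_pos_of_lt h₀ h₁
  have hterm : ∀ j ∈ Icc 1 (p / 2),
      ((a * (p - 2 * j : ℕ) / p : ℤ) : ZMod 2) =
        (a - 1 : ℤ) - ((2 * a * j / p : ℤ) : ZMod 2) := by
    intro j hj
    rw [mem_Icc] at hj
    have hnd : ¬ (p : ℤ) ∣ 2 * a * j := by
      rw [← ZMod.intCast_zmod_eq_zero_iff_dvd]
      push_cast
      exact mul_ne_zero (mul_ne_zero (by simpa using hne two_pos (by omega)) ha)
        (hne (by omega) (by omega))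
    rw [Nat.cast_sub (by omega),
      show a * (p - (2 * j : ℕ) : ℤ) = a * p - 2 * a * j by push_cast; ring,
      Int.mul_sub_ediv_of_not_dvd hP hnd]
    push_cast
    ring
  have hcard : (#(Icc 1 (p / 2)) : ZMod 2) = 0 := by
    rw [Nat.card_Icc, ZMod.natCast_eq_zero_iff]
    omega
  rw [sum_congr rfl hterm, sum_sub_distrib, sum_const, nsmul_eq_mul, hcard, zero_mul, zero_sub]

theorem S_zero_mod_two (p : ℕ) [Fact p.Prime] (h4 : p % 4 = 1)
    (a : ℤ) (ha : Int.gcd a p = 1) :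
    (∑ μ ∈ Finset.range p, ∑ ν ∈ Finset.range p,
        (μ : ℤ) * legendreSym p ν * Int.fdiv (a * μ + ν) p)
      ≡ (legendreSym p a - 1) / 2 [ZMOD 2] := by
  have hp : p.Prime := Fact.out
  have ha' : (a : ZMod p) ≠ 0 := ZMod.ne_zero_of_gcd_eq_one hp ha
  refine (ZMod.intCast_eq_intCast_iff _ _ 2).mp ?_
  calc ((∑ μ ∈ range p, ∑ ν ∈ range p, (μ : ℤ) * legendreSym p ν * Int.fdiv (a * μ + ν) p : ℤ) :
        ZMod 2)
      = ∑ μ ∈ range p, (μ : ZMod 2) * ((a * μ - a * μ / p : ℤ) : ZMod 2) := by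
        rw [Int.cast_sum]
        refine sum_congr rfl fun μ _ => ?_
        rw [← sum_legendreSym_mul_add_ediv_zmod_two, ← Int.cast_natCast (R := ZMod 2) μ,
          ← Int.cast_mul, mul_sum]
        simp only [mul_assoc, Int.fdiv_eq_ediv_of_nonneg _ (Nat.cast_nonneg p)]
    _ = a * ∑ μ ∈ range p, (μ : ZMod 2) -
          ∑ μ ∈ range p, (μ : ZMod 2) * ((a * μ / p : ℤ) : ZMod 2) := by
        rw [mul_sum, ← sum_sub_distrib]
        refine sum_congr rfl fun μ _ => ?_
        push_cast
        linear_combination (a : ZMod 2) * ZMod.pow_card (μ : ZMod 2)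
    _ = -∑ μ ∈ range p with Odd μ, ((a * μ / p : ℤ) : ZMod 2) := by
        rw [sum_range_natCast_zmod_two (by omega), mul_zero, zero_sub, sum_natCast_zmod_two_mul]
    _ = -∑ j ∈ Icc 1 (p / 2), ((a * (p - 2 * j : ℕ) / p : ℤ) : ZMod 2) := by
        rw [sum_range_filter_odd (hp.odd_of_ne_two (by omega))]
    _ = ∑ j ∈ Icc 1 (p / 2), ((2 * a * j / p : ℤ) : ZMod 2) := by
        rw [sum_Icc_mul_sub_two_mul_ediv_zmod_two p h4 ha', neg_neg]
    _ = (((legendreSym p a - 1) / 2 : ℤ) : ZMod 2) :=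
        (legendreSym.sub_one_div_two_eq_sum_two_mul_ediv p (by omega) ha').symm
end

section
/- For odd b with b > 1 and (a,b) = 1, ∑_{j=1}^{(b−1)/2} ⌊2aj/b⌋ ≡ ((a|b) − 1)/2 (mod 2), where (a|b) is the Jacobi symbol. -/
/-!
For odd `b`, `⌊2aj/b⌋` is odd exactly when the residue of `aj` mod `b` exceeds `b/2`, so
`∑ ⌊2aj/b⌋` has the parity of Gauss's count `μ(a, b)` (`gaussCount`) of such `1 ≤ j ≤ b/2`, and it suffices to
prove Gauss's lemma `(a|b) = (-1)^μ(a, b)` for the Jacobi symbol, by strong induction on `b`.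
Both sides depend only on `a mod b`, and replacing `a` by `b - a` multiplies both by
`(-1)^(b/2)`, so we may take `a < b` odd. Then `μ(a, b) ≡ ∑ ⌊aj/b⌋ (mod 2)`, because
`j ↦ |aj|` (least absolute residue mod `b`) permutes `1, …, b/2`; counting the lattice points of
the rectangle `(0, a/2) × (0, b/2)` on either side of its diagonal gives
`μ(a, b) + μ(b, a) ≡ (a/2)(b/2)`, and quadratic reciprocity reduces `(a|b)` to `(b|a)`.
-/

open Finset

def gaussCount (a b : ℕ) : ℕ := #{j ∈ Icc 1 (b / 2) | b / 2 < a * j % b}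

lemma neg_one_pow_eq_of_modEq {R : Type*} [Ring R] {m n : ℕ}
    (h : m ≡ n [MOD 2]) : (-1 : R) ^ m = (-1) ^ n := by
  rw [neg_one_pow_eq_pow_mod_two, h, ← neg_one_pow_eq_pow_mod_two]

lemma natCast_modEq_neg_one_pow_sub_one_div_two (n : ℕ) :
    (n : ℤ) ≡ ((-1) ^ n - 1) / 2 [ZMOD 2] := by
  rcases n.even_or_odd with ⟨k, rfl⟩ | ⟨k, rfl⟩
  · rw [Even.neg_one_pow ⟨k, rfl⟩, Int.ModEq]
    push_cast
    omega
  · rw [Odd.neg_one_pow ⟨k, rfl⟩, Int.ModEq]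
    push_cast
    omega

lemma two_mul_div_mod_two {b : ℕ} (hb : Odd b) (m : ℕ) :
    2 * m / b % 2 = if b / 2 < m % b then 1 else 0 := by
  have hb2 : b % 2 = 1 := Nat.odd_iff.mp hb
  have hr : m % b < b := Nat.mod_lt m hb.pos
  have hm : 2 * m = 2 * (m % b) + b * (2 * (m / b)) := by
    have := Nat.mod_add_div m b
    rw [mul_left_comm]
    omega
  rw [hm, Nat.add_mul_div_left _ _ hb.pos]
  split_ifs with h
  · rw [Nat.div_eq_of_lt_le (k := 1) (by omega) (by omega)]
    omega
  · rw [Nat.div_eq_of_lt (by omega)]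
    omega

lemma sum_two_mul_div_modEq_gaussCount {b : ℕ} (hb : Odd b) (a : ℕ) :
    ∑ j ∈ Icc 1 (b / 2), 2 * a * j / b ≡ gaussCount a b [MOD 2] := by
  rw [Nat.ModEq, sum_nat_mod, gaussCount, card_filter]
  congr 1
  refine sum_congr rfl fun j _ => ?_
  rw [mul_assoc, two_mul_div_mod_two hb]

lemma gaussCount_mod_left (a b : ℕ) : gaussCount (a % b) b = gaussCount a b := by
  simp only [gaussCount, Nat.mod_mul_mod]

lemma mul_mod_ne_zero_of_coprime {a b j : ℕ} (hab : a.Coprime b) (hj0 : 0 < j) (hjb : j < b) :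
    a * j % b ≠ 0 := fun h =>
  (Nat.le_of_dvd hj0 (hab.symm.dvd_of_dvd_mul_left (Nat.dvd_of_mod_eq_zero h))).not_gt hjb

lemma gaussCount_sub_left_add_gaussCount {a b : ℕ} (hb : Odd b) (hab : a.Coprime b)
    (hle : a ≤ b) : gaussCount (b - a) b + gaussCount a b = b / 2 := by
  have : NeZero b := ⟨hb.pos.ne'⟩
  have hb2 : b % 2 = 1 := Nat.odd_iff.mp hb
  have hflip : ∀ j ∈ Icc 1 (b / 2), b / 2 < (b - a) * j % b ↔ ¬b / 2 < a * j % b := by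
    intro j hj
    rw [mem_Icc] at hj
    have hr := mul_mod_ne_zero_of_coprime hab hj.1 (by omega)
    have hne : ((a * j : ℕ) : ZMod b) ≠ 0 := by
      rwa [Ne, ZMod.natCast_eq_zero_iff, Nat.dvd_iff_mod_eq_zero]
    have hneg : (b - a) * j % b = b - a * j % b := by
      have hcast : (((b - a) * j : ℕ) : ZMod b) = -((a * j : ℕ) : ZMod b) := by
        push_cast [Nat.cast_sub hle, ZMod.natCast_self]
        ring
      rw [← ZMod.val_natCast, hcast, ZMod.neg_val, if_neg hne, ZMod.val_natCast]
    have := Nat.mod_lt (a * j) hb.pos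
    omega
  rw [gaussCount, filter_congr hflip, add_comm, gaussCount, card_filter_add_card_filter_not,
    Nat.card_Icc, Nat.add_sub_cancel]

lemma ZMod.bijOn_natAbs_valMinAbs_mul {b : ℕ} {u : ZMod b} (hu : IsUnit u) :
    Set.BijOn (fun j : ℕ => (u * j).valMinAbs.natAbs) (Icc 1 (b / 2) : Set ℕ) (Icc 1 (b / 2)) := by
  rcases b.eq_zero_or_pos with rfl | hb
  · simp
  have : NeZero b := ⟨hb.ne'⟩
  have hmaps : Set.MapsTo (fun j : ℕ => (u * j).valMinAbs.natAbs)
      (Icc 1 (b / 2) : Set ℕ) (Icc 1 (b / 2)) := by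
    intro j hj
    simp only [coe_Icc, Set.mem_Icc] at hj ⊢
    refine ⟨Nat.one_le_iff_ne_zero.2 ?_, ZMod.natAbs_valMinAbs_le _⟩
    rw [Ne, Int.natAbs_eq_zero, ZMod.valMinAbs_eq_zero, hu.mul_right_eq_zero,
      ZMod.natCast_eq_zero_iff]
    exact fun h => (Nat.le_of_dvd hj.1 h).not_gt (by omega)
  have hinj : Set.InjOn (fun j : ℕ => (u * j).valMinAbs.natAbs) (Icc 1 (b / 2) : Set ℕ) := by
    intro i hi j hj hij
    simp only [coe_Icc, Set.mem_Icc] at hi hj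
    rcases ZMod.natAbs_valMinAbs_eq_natAbs_valMinAbs.1 hij with h | h
    · have := (ZMod.natCast_eq_natCast_iff' i j b).1 (hu.mul_left_cancel h)
      rwa [Nat.mod_eq_of_lt (by omega), Nat.mod_eq_of_lt (by omega)] at this
    · rw [← mul_neg] at h
      have hsum : ((i + j : ℕ) : ZMod b) = 0 := by
        rw [Nat.cast_add, hu.mul_left_cancel h, neg_add_cancel]
      have := Nat.le_of_dvd (by omega) ((ZMod.natCast_eq_zero_iff _ _).1 hsum)
      omega
  exact ⟨hmaps, hinj, surjOn_of_injOn_of_card_le _ hmaps hinj le_rfl⟩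

lemma natCast_div_eq_add_min_add_ite {b : ℕ} (hb : Odd b) (m : ℕ) :
    ((m / b : ℕ) : ZMod 2) =
      m + min (m % b) (b - m % b) + if b / 2 < m % b then 1 else 0 := by
  have hdiv := congrArg (Nat.cast : ℕ → ZMod 2) (Nat.div_add_mod m b)
  have heven : ((m % b + min (m % b) (b - m % b) + if b / 2 < m % b then 1 else 0 : ℕ) :
      ZMod 2) = 0 := by
    have hb2 : b % 2 = 1 := Nat.odd_iff.mp hb
    have := Nat.mod_lt m hb.pos
    rw [ZMod.natCast_eq_zero_iff]
    split_ifs <;> omega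
  push_cast [ZMod.natCast_eq_one_iff_odd.2 hb] at hdiv heven
  linear_combination hdiv - heven

lemma sum_mul_div_modEq_gaussCount {a b : ℕ} (ha : Odd a) (hb : Odd b) (hab : a.Coprime b) :
    ∑ j ∈ Icc 1 (b / 2), a * j / b ≡ gaussCount a b [MOD 2] := by
  have : NeZero b := ⟨hb.pos.ne'⟩
  have hfold : ∑ j ∈ Icc 1 (b / 2), ((min (a * j % b) (b - a * j % b) : ℕ) : ZMod 2) =
      ∑ j ∈ Icc 1 (b / 2), (j : ZMod 2) := by
    have h := ZMod.bijOn_natAbs_valMinAbs_mul ((ZMod.isUnit_iff_coprime a b).2 hab)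
    refine sum_nbij _ (fun j hj => h.mapsTo hj) h.injOn h.surjOn fun j _ => ?_
    rw [← Nat.cast_mul, ZMod.valMinAbs_natAbs_eq_min, ZMod.val_natCast]
  rw [← ZMod.natCast_eq_natCast_iff, gaussCount, card_filter]
  push_cast [natCast_div_eq_add_min_add_ite hb, ZMod.natCast_eq_one_iff_odd.2 ha, one_mul]
  rw [sum_add_distrib, sum_add_distrib, hfold, CharTwo.add_self_eq_zero, zero_add]

lemma card_filter_mul_le_eq_div {p m n : ℕ} (hp : 0 < p) (hm : m / p ≤ n) :
    #{y ∈ Icc 1 n | p * y ≤ m} = m / p := by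
  rw [ZMod.div_eq_filter_card hp hm, Nat.succ_eq_add_one, Ico_add_one_right_eq_Icc]
  simp only [mul_comm p]

lemma sum_mul_div_add_sum_mul_div_eq_mul_of_coprime {p q : ℕ} (hpq : p.Coprime q) :
    ∑ x ∈ Icc 1 (p / 2), q * x / p + ∑ y ∈ Icc 1 (q / 2), p * y / q = p / 2 * (q / 2) := by
  have row : ∀ {p q : ℕ}, ∀ x ∈ Icc 1 (p / 2),
      q * x / p = ∑ y ∈ Icc 1 (q / 2), if p * y ≤ q * x then 1 else 0 := by
    intro p q x hx
    rw [mem_Icc] at hx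
    rw [← card_filter, card_filter_mul_le_eq_div (by omega)]
    calc q * x / p ≤ q * (p / 2) / p := by gcongr; exact hx.2
      _ ≤ q / 2 := by rw [mul_comm]; exact Nat.div_mul_div_le_div _ _ _
  have cell : ∀ x ∈ Icc 1 (p / 2), ∀ y ∈ Icc 1 (q / 2),
      ((if p * y ≤ q * x then 1 else 0) + if q * x ≤ p * y then 1 else 0) = 1 := by
    intro x hx y _
    rw [mem_Icc] at hx
    have hne : p * y ≠ q * x := fun h =>
      (Nat.le_of_dvd (by omega) (hpq.dvd_of_dvd_mul_left ⟨y, h.symm⟩)).not_gt (by omega)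
    split_ifs <;> omega
  rw [sum_congr rfl (row (p := p)), sum_congr rfl (row (p := q)), sum_comm (s := Icc 1 (q / 2)),
    ← sum_add_distrib]
  simp_rw [← sum_add_distrib]
  rw [sum_congr rfl fun x hx => sum_congr rfl (cell x hx)]
  simp

lemma gaussCount_add_gaussCount_modEq {a b : ℕ} (ha : Odd a) (hb : Odd b) (hab : a.Coprime b) :
    gaussCount a b + gaussCount b a ≡ a / 2 * (b / 2) [MOD 2] := by
  rw [← sum_mul_div_add_sum_mul_div_eq_mul_of_coprime hab, add_comm (∑ x ∈ _, _)]
  exact ((sum_mul_div_modEq_gaussCount ha hb hab).add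
    (sum_mul_div_modEq_gaussCount hb ha hab.symm)).symm

lemma jacobiSym_sub_left {a b : ℕ} (hb : Odd b) (hle : a ≤ b) :
    jacobiSym (b - a : ℕ) b = (-1) ^ (b / 2) * jacobiSym a b := by
  rw [jacobiSym.mod_left' (a₂ := -a) (by rw [Nat.cast_sub hle, sub_eq_add_neg, Int.add_emod_left]),
    jacobiSym.neg _ hb, ZMod.χ₄_eq_neg_one_pow (Nat.odd_iff.mp hb)]

lemma jacobiSym_eq_neg_one_pow_gaussCount_of_sub_left {a b : ℕ} (hb : Odd b) (hab : a.Coprime b)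
    (hle : a ≤ b) (h : jacobiSym (b - a : ℕ) b = (-1) ^ gaussCount (b - a) b) :
    jacobiSym a b = (-1) ^ gaussCount a b := by
  have hsq : ∀ n : ℕ, (-1 : ℤ) ^ n * (-1) ^ n = 1 := fun n => by rw [← mul_pow]; simp
  calc jacobiSym a b = (-1) ^ (b / 2) * jacobiSym (b - a : ℕ) b := by
        rw [jacobiSym_sub_left hb hle, ← mul_assoc, hsq, one_mul]
    _ = (-1) ^ (gaussCount (b - a) b + gaussCount a b) * (-1) ^ gaussCount (b - a) b := by
        rw [h, gaussCount_sub_left_add_gaussCount hb hab hle]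
    _ = (-1) ^ gaussCount a b := by rw [pow_add, mul_comm, ← mul_assoc, hsq, one_mul]

lemma jacobiSym_eq_neg_one_pow_gaussCount_of_swap {a b : ℕ} (ha : Odd a) (hb : Odd b)
    (hab : a.Coprime b) (h : jacobiSym b a = (-1) ^ gaussCount b a) :
    jacobiSym a b = (-1) ^ gaussCount a b := by
  rw [jacobiSym.quadratic_reciprocity ha hb, h, ← pow_add]
  apply neg_one_pow_eq_of_modEq
  have := gaussCount_add_gaussCount_modEq ha hb hab
  unfold Nat.ModEq at this ⊢
  omega

theorem jacobiSym_eq_neg_one_pow_gaussCount {a b : ℕ} (hb : Odd b) (hab : a.Coprime b) :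
    jacobiSym a b = (-1) ^ gaussCount a b := by
  induction b using Nat.strong_induction_on generalizing a with
  | _ b ih =>
  have of_odd : ∀ c < b, Odd c → c.Coprime b → jacobiSym c b = (-1) ^ gaussCount c b :=
    fun c hcb hc hcop =>
      jacobiSym_eq_neg_one_pow_gaussCount_of_swap hc hb hcop (ih c hcb hc hcop.symm)
  have of_lt : ∀ c < b, c.Coprime b → jacobiSym c b = (-1) ^ gaussCount c b := by
    intro c hcb hcop
    rcases c.even_or_odd with hc | hc
    · rcases c.eq_zero_or_pos with rfl | hc0
      · rw [(Nat.coprime_zero_left b).1 hcop]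
        simp [gaussCount]
      refine jacobiSym_eq_neg_one_pow_gaussCount_of_sub_left hb hcop hcb.le
        (of_odd (b - c) (by omega) (Nat.Odd.sub_even hcb.le hb hc)
          ((Nat.coprime_self_sub_left hcb.le).2 hcop))
    · exact of_odd c hcb hc hcop
  rw [jacobiSym.mod_left, ← Int.natCast_mod, ← gaussCount_mod_left]
  exact of_lt _ (Nat.mod_lt _ hb.pos) ((ZMod.coprime_mod_iff_coprime _ _).2 hab)

theorem floor_double_sum_jacobi_general (a b : ℕ) (hb : Odd b)
    (hab : Nat.gcd a b = 1) :
    ((∑ j ∈ Finset.Icc 1 ((b - 1) / 2), 2 * a * j / b : ℕ) : ℤ)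
      ≡ (jacobiSym a b - 1) / 2 [ZMOD 2] := by
  have hhalf : (b - 1) / 2 = b / 2 := by
    obtain ⟨k, rfl⟩ := hb
    omega
  rw [hhalf, jacobiSym_eq_neg_one_pow_gaussCount hb hab,
    ← neg_one_pow_eq_of_modEq (sum_two_mul_div_modEq_gaussCount hb a)]
  exact natCast_modEq_neg_one_pow_sub_one_div_two _

theorem floor_double_sum_jacobi (a b : ℕ) (hb : Odd b) (hb1 : 1 < b)
    (hab : Nat.gcd a b = 1) :
    ((∑ j ∈ Finset.Icc 1 ((b - 1) / 2), 2 * a * j / b : ℕ) : ℤ)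
      ≡ (jacobiSym a b - 1) / 2 [ZMOD 2] :=
  floor_double_sum_jacobi_general a b hb hab
end

section
/- Let t(h,k) = ∑_{μ=0}^{k-1} μ⌊hμ/k⌋. For any positive integers h, k, q, with d = gcd(h,k), one has t(qh, qk) = q·t(h,k) + (1/12)·k·q·(q−1)·(4hk(q+1) − 6h − 3(k−1) + 3(d−1)). -/
/-!
Since `⌊qhμ/(qk)⌋ = ⌊hμ/k⌋`, writing `μ = ak + r` with `a < q`, `r < k` splits `t(qh, qk)` into
`q` blocks, the `a`-th of which is `t(h, k)` plus a quadratic polynomial in `a` whose coefficients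
involve `∑_{r<k} ⌊hr/k⌋ = (hk - h - k + d)/2`. That last identity comes from pairing `r` with
`k - r`: the residues of `hr` and `h(k - r)` mod `k` add up to `k`, except for the `d` values of `r`
with `k ∣ hr`, where both vanish.
-/

/-- `t(h,k) = ∑_{μ=0}^{k-1} μ ⌊hμ/k⌋`. -/
def tSum (h k : ℕ) : ℕ := ∑ μ ∈ Finset.range k, μ * (h * μ / k)

open Finset

theorem Finset.sum_range_reflect_of_apply_zero_eq {M : Type*} [AddCancelCommMonoid M]
    (f : ℕ → M) {n : ℕ} (hf : f 0 = f n) : ∑ r ∈ range n, f (n - r) = ∑ r ∈ range n, f r := by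
  have := sum_range_reflect f (n + 1)
  simp only [add_tsub_cancel_right, sum_range_succ, tsub_self, hf] at this
  exact add_right_cancel this

theorem Finset.sum_range_mul_eq_sum_sum {M : Type*} [AddCommMonoid M] (f : ℕ → M) (q k : ℕ) :
    ∑ μ ∈ range (q * k), f μ = ∑ a ∈ range q, ∑ r ∈ range k, f (a * k + r) := by
  induction q with
  | zero => simp
  | succ q ih => rw [Nat.succ_mul, sum_range_add, ih, sum_range_succ]

namespace Nat

theorem mul_mod_add_mul_sub_mod {h k r : ℕ} (hr : r ≤ k) :
    h * r % k + h * (k - r) % k = if k ∣ h * r then 0 else k := by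
  rcases k.eq_zero_or_pos with rfl | hk
  · obtain rfl : r = 0 := by omega
    simp
  have hsum : k ∣ h * r % k + h * (k - r) % k := by
    rw [dvd_iff_mod_eq_zero, ← add_mod, ← mul_add, Nat.add_sub_cancel' hr, mul_mod_left]
  obtain ⟨c, hc⟩ := hsum
  have hlt₁ := mod_lt (h * r) hk
  have hlt₂ := mod_lt (h * (k - r)) hk
  have hc2 : c < 2 := by nlinarith
  split_ifs with hdvd
  · rw [mod_eq_zero_of_dvd hdvd] at hc ⊢
    interval_cases c <;> omega
  · rw [dvd_iff_mod_eq_zero] at hdvd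
    interval_cases c <;> omega

theorem dvd_mul_iff_div_gcd_dvd {h k r : ℕ} (hk : 0 < k) : k ∣ h * r ↔ k / gcd h k ∣ r := by
  obtain ⟨h', k', hcop, hh, hk'⟩ := exists_coprime h k
  have hd : 0 < gcd h k := gcd_pos_of_pos_right h hk
  calc k ∣ h * r ↔ k' * gcd h k ∣ h' * r * gcd h k := by rw [← hk', mul_right_comm, ← hh]
    _ ↔ k' ∣ h' * r := mul_dvd_mul_iff_right hd.ne'
    _ ↔ k' ∣ r := hcop.symm.dvd_mul_left
    _ ↔ k / gcd h k ∣ r := by rw [Nat.div_eq_of_eq_mul_left hd hk']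

theorem card_filter_range_dvd_mul {h k : ℕ} (hk : 0 < k) :
    #{r ∈ range k | k ∣ h * r} = gcd h k := by
  have hm : 0 < k / gcd h k := div_pos (gcd_le_right _ hk) (gcd_pos_of_pos_right h hk)
  simp_rw [dvd_mul_iff_div_gcd_dvd hk, ← modEq_zero_iff_dvd, ← count_eq_card_filter_range,
    count_modEq_card k hm, zero_mod,
    mod_eq_zero_of_dvd (div_dvd_of_dvd (gcd_dvd_right h k)), lt_irrefl, if_false, add_zero,
    Nat.div_div_self (gcd_dvd_right h k) hk.ne']

theorem two_mul_sum_range_mul_mod {h k : ℕ} :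
    2 * ∑ r ∈ range k, h * r % k + k * gcd h k = k * k := by
  rcases k.eq_zero_or_pos with rfl | hk
  · simp
  have hreflect := sum_range_reflect_of_apply_zero_eq (fun r => h * r % k) (n := k) (by simp)
  have hpair : 2 * ∑ r ∈ range k, h * r % k = ∑ r ∈ range k, if k ∣ h * r then 0 else k := by
    rw [two_mul]
    nth_rw 2 [← hreflect]
    rw [← sum_add_distrib]
    exact sum_congr rfl fun r hr => mul_mod_add_mul_sub_mod (mem_range.1 hr).le
  have hcard := card_filter_add_card_filter_not (s := range k) (fun r => k ∣ h * r)
  rw [card_filter_range_dvd_mul hk, card_range] at hcard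
  rw [hpair, sum_ite, sum_const_zero, sum_const, smul_eq_mul, zero_add, mul_comm _ k, ← mul_add, add_comm, hcard]

theorem two_mul_sum_range_mul_div {h k : ℕ} :
    2 * ∑ r ∈ range k, h * r / k + h + k = h * k + gcd h k := by
  rcases k.eq_zero_or_pos with rfl | hk
  · simp
  have hdivmod : k * ∑ r ∈ range k, h * r / k + ∑ r ∈ range k, h * r % k
      = h * ∑ r ∈ range k, r := by
    rw [mul_sum, mul_sum, ← sum_add_distrib]
    exact sum_congr rfl fun r _ => div_add_mod _ _
  have hmod := two_mul_sum_range_mul_mod (h := h) (k := k)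
  have hid := sum_range_id_mul_two k
  apply Nat.eq_of_mul_eq_mul_left hk
  zify [hk] at hdivmod hmod hid ⊢
  linear_combination 2 * hdivmod - hmod + h * hid

end Nat

theorem Finset.two_mul_sum_range_natCast {R : Type*} [CommRing R] (n : ℕ) :
    2 * ∑ i ∈ range n, (i : R) = n * (n - 1) := by
  induction n with
  | zero => simp
  | succ n ih => rw [sum_range_succ, mul_add, ih]; push_cast; ring

theorem Finset.six_mul_sum_range_natCast_sq {R : Type*} [CommRing R] (n : ℕ) :
    6 * ∑ i ∈ range n, (i : R) ^ 2 = n * (n - 1) * (2 * n - 1) := by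
  induction n with
  | zero => simp
  | succ n ih => rw [sum_range_succ, mul_add, ih]; push_cast; ring

theorem sum_range_mul_add_mul_div (h k a : ℕ) :
    ∑ r ∈ range k, (a * k + r) * (h * (a * k + r) / k)
      = h * k * k * a ^ 2 + (k * ∑ r ∈ range k, h * r / k + h * ∑ r ∈ range k, r) * a
        + tSum h k := by
  calc ∑ r ∈ range k, (a * k + r) * (h * (a * k + r) / k)
      = ∑ r ∈ range k, (h * k * a ^ 2 + a * k * (h * r / k) + h * a * r + r * (h * r / k)) := by
        refine sum_congr rfl fun r hr => ?_
        have hk : 0 < k := pos_of_gt (mem_range.1 hr)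
        rw [show h * (a * k + r) = h * r + h * a * k by ring, Nat.add_mul_div_right _ _ hk]
        ring
    _ = _ := by
        simp only [sum_add_distrib, sum_const, card_range, smul_eq_mul, ← mul_sum, tSum]
        rw [← mul_sum]
        ring

theorem tSum_mul_mul (h k q : ℕ) :
    tSum (q * h) (q * k)
      = h * k * k * ∑ a ∈ range q, a ^ 2
        + (k * ∑ r ∈ range k, h * r / k + h * ∑ r ∈ range k, r) * ∑ a ∈ range q, a
        + q * tSum h k := by
  rcases q.eq_zero_or_pos with rfl | hq
  · simp [tSum]
  rw [tSum]
  simp_rw [mul_assoc q h, Nat.mul_div_mul_left _ _ hq]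
  rw [sum_range_mul_eq_sum_sum, sum_congr rfl fun a _ => sum_range_mul_add_mul_div h k a]
  simp only [sum_add_distrib, sum_const, card_range, smul_eq_mul, ← mul_sum]
  rw [← mul_sum]

theorem tSum_scaling_general (h k q : ℕ) :
    (tSum (q * h) (q * k) : ℚ)
      = q * tSum h k + (1 / 12) * k * q * ((q : ℚ) - 1) *
          (4 * h * k * ((q : ℚ) + 1) - 6 * h - 3 * ((k : ℚ) - 1)
            + 3 * ((Nat.gcd h k : ℚ) - 1)) := by
  have hfloor := congrArg (Nat.cast : ℕ → ℚ) (Nat.two_mul_sum_range_mul_div (h := h) (k := k))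
  push_cast at hfloor
  rw [tSum_mul_mul]
  push_cast
  set F := ∑ r ∈ range k, ((h * r / k : ℕ) : ℚ)
  set S := ∑ r ∈ range k, (r : ℚ)
  linear_combination (h * k * k / 6 : ℚ) * six_mul_sum_range_natCast_sq (R := ℚ) q
    + ((k * F + h * S) / 2) * two_mul_sum_range_natCast (R := ℚ) q
    + (k * q * (q - 1) / 4 : ℚ) * hfloor
    + (h * q * (q - 1) / 4 : ℚ) * two_mul_sum_range_natCast (R := ℚ) k

theorem tSum_scaling (h k q : ℕ) (hh : 0 < h) (hk : 0 < k) (hq : 0 < q) :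
    (tSum (q * h) (q * k) : ℚ)
      = q * tSum h k + (1 / 12) * k * q * ((q : ℚ) - 1) *
          (4 * h * k * ((q : ℚ) + 1) - 6 * h - 3 * ((k : ℚ) - 1)
            + 3 * ((Nat.gcd h k : ℚ) - 1)) :=
  tSum_scaling_general h k q
end

section
/- Let p ≡ 1 (mod 4) be prime, K = kp with K odd, and (h,K) = 1 with h a quadratic residue mod p. Define τ_er(h,K) = #{0 < μ < K : p ∤ μ, μ even, μ a quadratic residue mod p, and the least nonnegative residue of hμ mod K is odd}. Then τ_er(h,K) is even if h is a fourth power modulo p, and odd if h is a quadratic residue but not a fourth power modulo p. -/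
open scoped Classical

/-- `τ_er(h,K)`: the number of even `μ ∈ (0,K)` coprime to `p` that are quadratic
residues mod `p` and whose least nonnegative residue of `hμ` mod `K` is odd. -/
noncomputable def tauER (p K h : ℕ) : ℕ :=
  ((Finset.Ioo 0 K).filter (fun μ =>
    ¬ p ∣ μ ∧ 2 ∣ μ ∧ IsSquare (μ : ZMod p) ∧ Odd (h * μ % K))).card

lemma card_square_units (p : ℕ) [hp : Fact p.Prime] (hodd : p % 2 = 1) :
    Nat.card {x : (ZMod p)ˣ // IsSquare x} = (p - 1) / 2 := by
  have hp2 : p ≠ 2 := by omega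
  set φ : (ZMod p)ˣ →* (ZMod p)ˣ := powMonoidHom 2 with hφ
  have hker : (φ.ker : Set (ZMod p)ˣ) = {1, -1} := by
    ext x
    simp only [SetLike.mem_coe, MonoidHom.mem_ker, hφ, powMonoidHom_apply,
      Set.mem_insert_iff, Set.mem_singleton_iff]
    constructor
    · intro hx
      have : ((x : ZMod p)) * (x : ZMod p) = 1 := by
        have := congrArg (Units.val) hx
        push_cast at this
        rw [sq] at this; exact_mod_cast this
      rcases mul_self_eq_one_iff.mp this with h | h
      · left; ext; simpa using h
      · right; ext; simpa using h
    · rintro (rfl | rfl) <;> simp [sq]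
  have hkcard : Nat.card φ.ker = 2 := by
    rw [← SetLike.coe_sort_coe, hker, Nat.card_coe_set_eq, Set.ncard_pair]
    intro h
    have h1 : (1 : ZMod p) = -1 := by
      have := congrArg (Units.val) h; simpa using this
    have h2 : ((2:ℕ) : ZMod p) = 0 := by push_cast; linear_combination h1
    have hd := (ZMod.natCast_eq_zero_iff 2 p).mp h2
    have := Nat.le_of_dvd (by norm_num) hd
    have := hp.out.two_le
    interval_cases p
    · exact hp2 rfl
  have hG : Nat.card (ZMod p)ˣ = p - 1 := by
    rw [Nat.card_eq_fintype_card, ZMod.card_units]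
  have hq := Subgroup.card_eq_card_quotient_mul_card_subgroup φ.ker
  have hrange : Nat.card φ.range = Nat.card ((ZMod p)ˣ ⧸ φ.ker) :=
    (Nat.card_congr (QuotientGroup.quotientKerEquivRange φ).toEquiv).symm
  have hsubt : Nat.card {x : (ZMod p)ˣ // IsSquare x} = Nat.card φ.range := by
    apply Nat.card_congr
    apply Equiv.subtypeEquivRight
    intro x
    simp only [MonoidHom.mem_range, hφ, powMonoidHom_apply]
    constructor
    · rintro ⟨y, rfl⟩; exact ⟨y, (sq y).symm ▸ rfl⟩
    · rintro ⟨y, rfl⟩; exact ⟨y, by rw [sq]⟩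
  rw [hsubt, hrange]
  rw [hkcard, hG] at hq
  omega

lemma coprime_of_Ioo (p r : ℕ) [hp : Fact p.Prime] (h1 : 0 < r) (h2 : r < p) :
    Nat.Coprime r p :=
  (Nat.coprime_comm).mp (hp.out.coprime_iff_not_dvd.mpr
    (fun hd => absurd (Nat.le_of_dvd h1 hd) (by omega)))

lemma card_Q (p : ℕ) [hp : Fact p.Prime] :
    (((Finset.Ioo 0 p).filter (fun r => IsSquare ((r : ℕ) : ZMod p)))).card
      = Nat.card {x : (ZMod p)ˣ // IsSquare x} := by
  have hp1 : 1 < p := hp.out.one_lt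
  haveI : NeZero p := ⟨by omega⟩
  rw [Nat.card_eq_fintype_card, Fintype.card_subtype]
  apply Finset.card_bij (fun r hr => (ZMod.unitOfCoprime r (coprime_of_Ioo p r
      (Finset.mem_Ioo.mp (Finset.mem_filter.mp hr).1).1
      (Finset.mem_Ioo.mp (Finset.mem_filter.mp hr).1).2)))
  · intro r hr
    obtain ⟨hmem, hsq⟩ := Finset.mem_filter.mp hr
    obtain ⟨hr0, hrp⟩ := Finset.mem_Ioo.mp hmem
    simp only [Finset.mem_filter, Finset.mem_univ, true_and]
    obtain ⟨b, hb⟩ := hsq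
    have hbne : b ≠ 0 := by
      rintro rfl
      rw [mul_zero] at hb
      have : ((r:ℕ) : ZMod p) ≠ 0 := by
        rw [Ne, ZMod.natCast_eq_zero_iff]
        intro hd; exact absurd (Nat.le_of_dvd hr0 hd) (by omega)
      exact this hb
    obtain ⟨u, hu⟩ := (isUnit_iff_ne_zero).mpr hbne
    refine ⟨u, ?_⟩
    ext
    simp [hb, ← hu]
  · intro r1 h1 r2 h2 heq
    have : ((r1:ℕ) : ZMod p) = ((r2:ℕ) : ZMod p) := by
      have := congrArg (Units.val) heq
      simpa using this
    have v1 := ZMod.val_natCast_of_lt (Finset.mem_Ioo.mp (Finset.mem_filter.mp h1).1).2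
    have v2 := ZMod.val_natCast_of_lt (Finset.mem_Ioo.mp (Finset.mem_filter.mp h2).1).2
    rw [← v1, ← v2, this]
  · intro x hx
    obtain ⟨-, hsq⟩ := Finset.mem_filter.mp hx
    refine ⟨((x : ZMod p)).val, ?_, ?_⟩
    · have hlt : ((x : ZMod p)).val < p := ZMod.val_lt _
      have hne : ((x : ZMod p)).val ≠ 0 := by
        intro h0
        have : (x : ZMod p) = 0 := by
          have h00 : ((x : ZMod p)).val = (0 : ZMod p).val := by simp [h0]
          exact ZMod.val_injective p h00
        exact x.ne_zero this
      refine Finset.mem_filter.mpr ⟨Finset.mem_Ioo.mpr ⟨by omega, hlt⟩, ?_⟩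
      rw [ZMod.natCast_val, ZMod.cast_id]
      exact hsq.map (Units.coeHom (ZMod p))
    · ext
      simp [ZMod.natCast_val, ZMod.cast_id]

lemma card_S (p k : ℕ) [hp : Fact p.Prime] :
    ((Finset.Ioo 0 (k*p)).filter (fun μ => ¬ p ∣ μ ∧ IsSquare ((μ:ℕ) : ZMod p))).card
      = k * (((Finset.Ioo 0 p).filter (fun r => IsSquare ((r : ℕ) : ZMod p)))).card := by
  have hp1 : 1 < p := hp.out.one_lt
  have key : ((Finset.Ioo 0 (k*p)).filter (fun μ => ¬ p ∣ μ ∧ IsSquare ((μ:ℕ) : ZMod p))).card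
      = (Finset.range k ×ˢ ((Finset.Ioo 0 p).filter
          (fun r => IsSquare ((r : ℕ) : ZMod p)))).card := by
    apply Finset.card_bij' (fun μ _ => (μ / p, μ % p)) (fun qr _ => qr.1 * p + qr.2)
    · intro μ hμ
      obtain ⟨hmem, hnd, hsq⟩ := Finset.mem_filter.mp hμ
      obtain ⟨h0, hlt⟩ := Finset.mem_Ioo.mp hmem
      have hm0 : μ % p ≠ 0 := fun h => hnd (Nat.dvd_of_mod_eq_zero h)
      refine Finset.mem_product.mpr ⟨Finset.mem_range.mpr ?_, Finset.mem_filter.mpr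
        ⟨Finset.mem_Ioo.mpr ⟨by omega, Nat.mod_lt _ (by omega)⟩, ?_⟩⟩
      · exact (Nat.div_lt_iff_lt_mul (by omega)).mpr hlt
      · rwa [ZMod.natCast_mod]
    · intro qr hqr
      obtain ⟨hq, hr⟩ := Finset.mem_product.mp hqr
      obtain ⟨hmem, hsq⟩ := Finset.mem_filter.mp hr
      obtain ⟨h0, hlt⟩ := Finset.mem_Ioo.mp hmem
      have hqk := Finset.mem_range.mp hq
      have h3 : (qr.1 + 1) * p ≤ k * p := Nat.mul_le_mul_right p (by omega)
      refine Finset.mem_filter.mpr ⟨Finset.mem_Ioo.mpr ⟨by omega, by nlinarith⟩, ?_, ?_⟩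
      · intro hd
        have : p ∣ qr.2 := (Nat.dvd_add_right ⟨qr.1, by ring⟩).mp hd
        exact absurd (Nat.le_of_dvd h0 this) (by omega)
      · have : ((qr.1 * p + qr.2 : ℕ) : ZMod p) = ((qr.2 : ℕ) : ZMod p) := by
          push_cast [ZMod.natCast_self]; ring
        rwa [this]
    · intro μ hμ
      exact Nat.div_add_mod' μ p
    · intro qr hqr
      obtain ⟨hq, hr⟩ := Finset.mem_product.mp hqr
      obtain ⟨hmem, hsq⟩ := Finset.mem_filter.mp hr
      obtain ⟨h0, hlt⟩ := Finset.mem_Ioo.mp hmem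
      have h1 : (qr.1 * p + qr.2) / p = qr.1 := by
        rw [mul_comm, Nat.mul_add_div (by omega), Nat.div_eq_of_lt hlt, add_zero]
      have h2 : (qr.1 * p + qr.2) % p = qr.2 := by
        rw [mul_comm, Nat.mul_add_mod, Nat.mod_eq_of_lt hlt]
      rw [h1, h2]
  rw [key, Finset.card_product, Finset.card_range]

lemma card_even_twice (p K : ℕ) [hp : Fact p.Prime] (hK : Odd K) (hpK : p ∣ K)
    (hneg : IsSquare (-1 : ZMod p)) :
    ((Finset.Ioo 0 K).filter (fun μ => ¬ p ∣ μ ∧ 2 ∣ μ ∧ IsSquare ((μ:ℕ) : ZMod p))).card * 2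
      = ((Finset.Ioo 0 K).filter (fun μ => ¬ p ∣ μ ∧ IsSquare ((μ:ℕ) : ZMod p))).card := by
  set S : Finset ℕ := (Finset.Ioo 0 K).filter (fun μ => ¬ p ∣ μ ∧ IsSquare ((μ:ℕ) : ZMod p))
    with hS
  have hKz : ((K:ℕ) : ZMod p) = 0 := (ZMod.natCast_eq_zero_iff K p).mpr hpK
  have hE : (Finset.Ioo 0 K).filter (fun μ => ¬ p ∣ μ ∧ 2 ∣ μ ∧ IsSquare ((μ:ℕ) : ZMod p))
      = S.filter (fun μ => 2 ∣ μ) := by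
    rw [hS, Finset.filter_filter]
    apply Finset.filter_congr
    intro μ _
    tauto
  rw [hE]
  have hsplit := Finset.card_filter_add_card_filter_not
    (s := S) (p := fun μ => 2 ∣ μ)
  have hbij : (S.filter (fun μ => 2 ∣ μ)).card = (S.filter (fun μ => ¬ 2 ∣ μ)).card := by
    apply Finset.card_bij (fun μ _ => K - μ)
    · intro μ hμ
      obtain ⟨hmemS, heven⟩ := Finset.mem_filter.mp hμ
      obtain ⟨hmem, hnd, hsq⟩ := Finset.mem_filter.mp hmemS
      obtain ⟨h0, hlt⟩ := Finset.mem_Ioo.mp hmem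
      obtain ⟨c, hc⟩ := hK
      refine Finset.mem_filter.mpr ⟨Finset.mem_filter.mpr ⟨Finset.mem_Ioo.mpr ⟨by omega, by omega⟩,
        ?_, ?_⟩, by omega⟩
      · intro hd
        obtain ⟨e, he⟩ := hpK
        obtain ⟨f, hf⟩ := hd
        exact hnd ⟨e - f, by rw [Nat.mul_sub]; omega⟩
      · have hc2 : ((K - μ : ℕ) : ZMod p) = -((μ:ℕ) : ZMod p) := by
          rw [Nat.cast_sub (by omega), hKz, zero_sub]
        rw [hc2, neg_eq_neg_one_mul]
        exact hneg.mul hsq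
    · intro μ1 h1 μ2 h2 heq
      have l1 := Finset.mem_Ioo.mp (Finset.mem_filter.mp (Finset.mem_filter.mp h1).1).1
      have l2 := Finset.mem_Ioo.mp (Finset.mem_filter.mp (Finset.mem_filter.mp h2).1).1
      omega
    · intro ν hν
      obtain ⟨hmemS, hodd⟩ := Finset.mem_filter.mp hν
      obtain ⟨hmem, hnd, hsq⟩ := Finset.mem_filter.mp hmemS
      obtain ⟨h0, hlt⟩ := Finset.mem_Ioo.mp hmem
      obtain ⟨c, hc⟩ := hK
      refine ⟨K - ν, Finset.mem_filter.mpr ⟨Finset.mem_filter.mpr ⟨Finset.mem_Ioo.mpr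
        ⟨by omega, by omega⟩, ?_, ?_⟩, by omega⟩, by omega⟩
      · intro hd
        obtain ⟨e, he⟩ := hpK
        obtain ⟨f, hf⟩ := hd
        exact hnd ⟨e - f, by rw [Nat.mul_sub]; omega⟩
      · have hc2 : ((K - ν : ℕ) : ZMod p) = -((ν:ℕ) : ZMod p) := by
          rw [Nat.cast_sub (by omega), hKz, zero_sub]
        rw [hc2, neg_eq_neg_one_mul]
        exact hneg.mul hsq
  omega

lemma quartic_iff (p : ℕ) [hp : Fact p.Prime] (h4 : p % 4 = 1) (a : (ZMod p)ˣ) :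
    (∃ x : (ZMod p)ˣ, x ^ 4 = a) ↔ a ^ ((p - 1) / 4) = 1 := by
  have hp5 : 5 ≤ p := by
    have := hp.out.two_le
    rcases Nat.lt_or_ge p 5 with h | h
    · interval_cases p <;> simp_all
    · exact h
  have hc : 4 * ((p - 1) / 4) = p - 1 := by omega
  have hcpos : 0 < (p - 1) / 4 := by omega
  constructor
  · rintro ⟨x, rfl⟩
    rw [← pow_mul, hc]
    exact ZMod.units_pow_card_sub_one_eq_one p x
  · intro h
    obtain ⟨g, hg⟩ := IsCyclic.exists_generator (α := (ZMod p)ˣ)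
    obtain ⟨n, hn⟩ : a ∈ Submonoid.powers g := by
      rw [mem_powers_iff_mem_zpowers]; apply hg
    have hord : orderOf g = p - 1 := by
      rw [orderOf_eq_card_of_forall_mem_zpowers hg, Nat.card_eq_fintype_card, ZMod.card_units]
    subst hn
    rw [← pow_mul] at h
    have hdvd : (p - 1) ∣ n * ((p - 1) / 4) := by
      have hh := orderOf_dvd_of_pow_eq_one h
      rwa [hord] at hh
    have h4n : 4 ∣ n := by
      refine Nat.dvd_of_mul_dvd_mul_right hcpos ?_
      rw [hc]; exact hdvd
    obtain ⟨m, rfl⟩ := h4n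
    exact ⟨g ^ m, by rw [← pow_mul, mul_comm]⟩

theorem main_calc (p k h : ℕ) [hp : Fact p.Prime] (h4 : p % 4 = 1)
    (hK : Odd (k * p)) (hcop : Nat.gcd h (k * p) = 1) (hsq : IsSquare (h : ZMod p)) :
    (-1 : ZMod p) ^ (((Finset.Ioo 0 (k*p)).filter (fun μ =>
        ¬ p ∣ μ ∧ 2 ∣ μ ∧ IsSquare ((μ:ℕ) : ZMod p) ∧ Odd (h * μ % (k*p)))).card)
      * (h : ZMod p) ^ (((Finset.Ioo 0 (k*p)).filter (fun μ =>
        ¬ p ∣ μ ∧ 2 ∣ μ ∧ IsSquare ((μ:ℕ) : ZMod p))).card) = 1 := by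
  set K := k * p with hKdef
  have hp1 : 1 < p := hp.out.one_lt
  have hk1 : 1 ≤ k := by
    rcases Nat.eq_zero_or_pos k with rfl | h
    · simp [hKdef] at hK
    · exact h
  have hK0 : 0 < K := by positivity
  have hpK : p ∣ K := ⟨k, mul_comm k p⟩
  have hcopK : Nat.Coprime h K := hcop
  have hcoph : Nat.Coprime h p := hcopK.coprime_dvd_right hpK
  have hpnh : ¬ (p ∣ h) := by
    intro hd
    have hdg : p ∣ Nat.gcd h (k * p) := Nat.dvd_gcd hd hpK
    rw [hcop] at hdg
    have := Nat.le_of_dvd one_pos hdg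
    omega
  have hh0 : ((h:ℕ) : ZMod p) ≠ 0 := by
    rw [Ne, ZMod.natCast_eq_zero_iff]; exact hpnh
  have hneg : IsSquare (-1 : ZMod p) := by
    rw [ZMod.exists_sq_eq_neg_one_iff]; omega
  set E : Finset ℕ := (Finset.Ioo 0 K).filter
    (fun μ => ¬ p ∣ μ ∧ 2 ∣ μ ∧ IsSquare ((μ:ℕ) : ZMod p)) with hE
  set f : ℕ → ℕ := fun μ => if Odd (h * μ % K) then K - h * μ % K else h * μ % K with hf
  have hr0 : ∀ μ ∈ E, h * μ % K ≠ 0 := by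
    intro μ hμ h0
    obtain ⟨hmem, -, -, -⟩ := Finset.mem_filter.mp hμ
    obtain ⟨hμ0, hμK⟩ := Finset.mem_Ioo.mp hmem
    have hd : K ∣ h * μ := Nat.dvd_of_mod_eq_zero h0
    have : K ∣ μ := (Nat.Coprime.dvd_of_dvd_mul_left (hcopK.symm) hd)
    exact absurd (Nat.le_of_dvd hμ0 this) (by omega)
  have hrK : ∀ μ : ℕ, h * μ % K < K := fun μ => Nat.mod_lt _ hK0
  have hcast : ∀ μ : ℕ, ((h * μ % K : ℕ) : ZMod p) = ((h:ℕ) : ZMod p) * ((μ:ℕ) : ZMod p) := by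
    intro μ
    have e := Nat.mod_add_div (h * μ) K
    have : ((h * μ % K : ℕ) : ZMod p) + ((K : ℕ) : ZMod p) * ((h * μ / K : ℕ) : ZMod p)
        = ((h:ℕ) : ZMod p) * ((μ:ℕ) : ZMod p) := by
      exact_mod_cast congrArg (Nat.cast : ℕ → ZMod p) e
    rwa [(ZMod.natCast_eq_zero_iff K p).mpr hpK, zero_mul, add_zero] at this
  have hrp : ∀ μ ∈ E, ¬ p ∣ (h * μ % K) := by
    intro μ hμ hd
    obtain ⟨hmem, hnd, -, -⟩ := Finset.mem_filter.mp hμ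
    have : ((h * μ % K : ℕ) : ZMod p) = 0 := (ZMod.natCast_eq_zero_iff _ p).mpr hd
    rw [hcast] at this
    have hμ0 : ((μ:ℕ) : ZMod p) ≠ 0 := by
      rw [Ne, ZMod.natCast_eq_zero_iff]; exact hnd
    exact (mul_ne_zero hh0 hμ0) this
  have hmaps : ∀ μ ∈ E, f μ ∈ E := by
    intro μ hμ
    obtain ⟨hmem, hnd, hev, hsqμ⟩ := Finset.mem_filter.mp hμ
    obtain ⟨hμ0, hμK⟩ := Finset.mem_Ioo.mp hmem
    have h0 := hr0 μ hμ
    have hK' := hrK μ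
    have hpr := hrp μ hμ
    have hsqr : IsSquare ((h * μ % K : ℕ) : ZMod p) := by
      rw [hcast]; exact hsq.mul hsqμ
    obtain ⟨c, hc⟩ := hK
    by_cases hodd : Odd (h * μ % K)
    · simp only [hf, if_pos hodd]
      refine Finset.mem_filter.mpr ⟨Finset.mem_Ioo.mpr ⟨by omega, by omega⟩, ?_,
        by have := Nat.odd_iff.mp hodd; omega, ?_⟩
      · intro hd
        obtain ⟨e, he⟩ := hpK
        obtain ⟨g, hg⟩ := hd
        exact hpr ⟨e - g, by rw [Nat.mul_sub]; omega⟩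
      · have : ((K - h * μ % K : ℕ) : ZMod p) = -((h * μ % K : ℕ) : ZMod p) := by
          rw [Nat.cast_sub (by omega), (ZMod.natCast_eq_zero_iff K p).mpr hpK, zero_sub]
        rw [this, neg_eq_neg_one_mul]
        exact hneg.mul hsqr
    · simp only [hf, if_neg hodd]
      refine Finset.mem_filter.mpr ⟨Finset.mem_Ioo.mpr ⟨by omega, hK'⟩, hpr, ?_, hsqr⟩
      rw [Nat.odd_iff] at hodd; omega
  have hinj : ∀ μ1 ∈ E, ∀ μ2 ∈ E, f μ1 = f μ2 → μ1 = μ2 := by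
    intro μ1 h1 μ2 h2 heq
    obtain ⟨hmem1, -, hev1, -⟩ := Finset.mem_filter.mp h1
    obtain ⟨hmem2, -, hev2, -⟩ := Finset.mem_filter.mp h2
    obtain ⟨ha, hb⟩ := Finset.mem_Ioo.mp hmem1
    obtain ⟨hc', hd'⟩ := Finset.mem_Ioo.mp hmem2
    have hlt1 := hrK μ1; have hlt2 := hrK μ2
    have hne1 := hr0 μ1 h1; have hne2 := hr0 μ2 h2
    have hsame : h * μ1 % K = h * μ2 % K → μ1 = μ2 := by
      intro hmod
      have hcongr : μ1 ≡ μ2 [MOD K] :=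
        Nat.ModEq.cancel_left_of_coprime hcopK.symm hmod
      have hout : μ1 % K = μ2 % K := hcongr
      rwa [Nat.mod_eq_of_lt hb, Nat.mod_eq_of_lt hd'] at hout
    have hmix : h * μ1 % K + h * μ2 % K = K → False := by
      intro hsum
      have e1 := Nat.mod_add_div (h * μ1) K
      have e2 := Nat.mod_add_div (h * μ2) K
      have hdvd : K ∣ h * (μ1 + μ2) := by
        refine ⟨1 + h * μ1 / K + h * μ2 / K, ?_⟩
        rw [Nat.mul_add h, Nat.mul_add K, Nat.mul_add K, Nat.mul_one]
        omega
      have hK12 : K ∣ μ1 + μ2 := Nat.Coprime.dvd_of_dvd_mul_left hcopK.symm hdvd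
      have hsum2 : μ1 + μ2 = K := by
        have h2K : μ1 + μ2 < 2 * K := by omega
        rcases hK12 with ⟨t, ht⟩
        have ht1 : t = 1 := by
          by_contra hne
          rcases Nat.lt_or_ge t 1 with hcase | hcase
          · interval_cases t
            omega
          · have h2t : 2 ≤ t := by omega
            have : 2 * K ≤ K * t := by
              calc 2 * K = K * 2 := by ring
                _ ≤ K * t := Nat.mul_le_mul_left K h2t
            omega
        rw [ht1, Nat.mul_one] at ht
        omega
      obtain ⟨c, hcK⟩ := hK
      omega
    by_cases o1 : Odd (h * μ1 % K) <;> by_cases o2 : Odd (h * μ2 % K)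
    · simp only [hf, if_pos o1, if_pos o2] at heq
      exact hsame (by omega)
    · simp only [hf, if_pos o1, if_neg o2] at heq
      exact (hmix (by omega)).elim
    · simp only [hf, if_neg o1, if_pos o2] at heq
      exact (hmix (by omega)).elim
    · simp only [hf, if_neg o1, if_neg o2] at heq
      exact hsame heq
  have himg : E.image f = E := by
    apply Finset.eq_of_subset_of_card_le
    · intro x hx
      obtain ⟨μ, hμ, rfl⟩ := Finset.mem_image.mp hx
      exact hmaps μ hμ
    · rw [Finset.card_image_of_injOn (fun x hx y hy => hinj x hx y hy)]
  have hprod : (∏ μ ∈ E, ((f μ : ℕ) : ZMod p)) = ∏ μ ∈ E, ((μ:ℕ) : ZMod p) := by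
    rw [← Finset.prod_image (fun x hx y hy => hinj x hx y hy), himg]
  have hptw : ∀ μ ∈ E, ((f μ : ℕ) : ZMod p)
      = (if Odd (h * μ % K) then (-1 : ZMod p) else 1)
        * (((h:ℕ) : ZMod p) * ((μ:ℕ) : ZMod p)) := by
    intro μ hμ
    by_cases hodd : Odd (h * μ % K)
    · simp only [hf, if_pos hodd]
      rw [Nat.cast_sub (le_of_lt (hrK μ)), (ZMod.natCast_eq_zero_iff K p).mpr hpK,
        zero_sub, hcast, neg_one_mul]
    · simp only [hf, if_neg hodd]
      rw [hcast, one_mul]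
  have hPne : (∏ μ ∈ E, ((μ:ℕ) : ZMod p)) ≠ 0 := by
    rw [Finset.prod_ne_zero_iff]
    intro μ hμ
    obtain ⟨-, hnd, -, -⟩ := Finset.mem_filter.mp hμ
    rw [Ne, ZMod.natCast_eq_zero_iff]; exact hnd
  have hMain : (∏ μ ∈ E, ((μ:ℕ) : ZMod p))
      = ((-1 : ZMod p) ^ ((E.filter (fun μ => Odd (h * μ % K))).card)
          * ((h:ℕ) : ZMod p) ^ E.card) * ∏ μ ∈ E, ((μ:ℕ) : ZMod p) := by
    conv_lhs => rw [← hprod]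
    rw [Finset.prod_congr rfl hptw, Finset.prod_mul_distrib, Finset.prod_ite,
      Finset.prod_const, Finset.prod_const, one_pow, mul_one, Finset.prod_mul_distrib,
      Finset.prod_const]
    ring
  have hcancel : (-1 : ZMod p) ^ ((E.filter (fun μ => Odd (h * μ % K))).card)
      * ((h:ℕ) : ZMod p) ^ E.card = 1 := by
    have := hMain
    nth_rewrite 1 [show (∏ μ ∈ E, ((μ:ℕ) : ZMod p))
      = 1 * ∏ μ ∈ E, ((μ:ℕ) : ZMod p) by rw [one_mul]] at this
    exact (mul_right_cancel₀ hPne this).symm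
  have hfilt : (Finset.Ioo 0 K).filter (fun μ =>
      ¬ p ∣ μ ∧ 2 ∣ μ ∧ IsSquare ((μ:ℕ) : ZMod p) ∧ Odd (h * μ % K))
      = E.filter (fun μ => Odd (h * μ % K)) := by
    rw [hE, Finset.filter_filter]
    apply Finset.filter_congr
    intro μ _
    tauto
  rw [hfilt]
  exact hcancel

theorem tauER_parity (p k h : ℕ) [Fact p.Prime] (h4 : p % 4 = 1)
    (hK : Odd (k * p)) (hcop : Nat.gcd h (k * p) = 1)
    (hsq : IsSquare (h : ZMod p)) :
    ((∃ x : (ZMod p)ˣ, ((x : ZMod p)) ^ 4 = (h : ZMod p)) → Even (tauER p (k * p) h)) ∧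
    (¬ (∃ x : (ZMod p)ˣ, ((x : ZMod p)) ^ 4 = (h : ZMod p)) → Odd (tauER p (k * p) h)) := by
  have hp : Fact p.Prime := inferInstance
  have hp5 : 5 ≤ p := by
    have := hp.out.two_le
    rcases Nat.lt_or_ge p 5 with hc | hc
    · interval_cases p <;> simp_all
    · exact hc
  have hpodd : p % 2 = 1 := by omega
  have hk1 : 1 ≤ k := by
    rcases Nat.eq_zero_or_pos k with rfl | hh
    · simp at hK
    · exact hh
  have hkodd : Odd k := (Nat.odd_mul.mp hK).1
  have hpK : p ∣ k * p := ⟨k, mul_comm k p⟩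
  have hcoph : Nat.Coprime h p := (show Nat.Coprime h (k * p) from hcop).coprime_dvd_right hpK
  have hpnh : ¬ (p ∣ h) := by
    intro hd
    have hdg : p ∣ Nat.gcd h (k * p) := Nat.dvd_gcd hd hpK
    rw [hcop] at hdg
    have := Nat.le_of_dvd one_pos hdg
    omega
  have hh0 : ((h:ℕ) : ZMod p) ≠ 0 := by
    rw [Ne, ZMod.natCast_eq_zero_iff]; exact hpnh
  have hneg : IsSquare (-1 : ZMod p) := by
    rw [ZMod.exists_sq_eq_neg_one_iff]; omega
  -- sizes
  set E : Finset ℕ := (Finset.Ioo 0 (k * p)).filter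
    (fun μ => ¬ p ∣ μ ∧ 2 ∣ μ ∧ IsSquare ((μ:ℕ) : ZMod p)) with hEdef
  have hcount : E.card * 2 = k * ((p - 1) / 2) := by
    rw [hEdef, card_even_twice p (k*p) hK hpK hneg, card_S p k, card_Q p,
      card_square_units p hpodd]
  have hEcard : E.card = k * ((p - 1) / 4) := by
    have hhalf : k * ((p - 1) / 2) = 2 * (k * ((p - 1) / 4)) := by
      rw [show (p - 1) / 2 = 2 * ((p - 1) / 4) by omega]
      ring
    omega
  -- the tau
  have htau : tauER p (k * p) h = ((Finset.Ioo 0 (k*p)).filter (fun μ =>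
      ¬ p ∣ μ ∧ 2 ∣ μ ∧ IsSquare ((μ:ℕ) : ZMod p) ∧ Odd (h * μ % (k*p)))).card := by
    unfold tauER
    apply Finset.card_bij (fun μ _ => μ) ?_ (fun a b _ _ h => h) (fun b hb => ⟨b, by
      simpa using hb, rfl⟩)
    intro a ha
    simpa using ha
  set τ : ℕ := tauER p (k * p) h with hτ
  have hmain := main_calc p k h h4 hK hcop hsq
  rw [← htau, ← hEdef] at hmain
  -- u = h ^ ((p-1)/4)
  set u : ZMod p := ((h:ℕ) : ZMod p) ^ ((p - 1) / 4) with hu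
  have hE2u : ((h:ℕ) : ZMod p) ^ E.card = u ^ k := by
    rw [hEcard, mul_comm, pow_mul]
  have hu2 : u * u = 1 := by
    rw [hu, ← pow_add]
    have : (p - 1) / 4 + (p - 1) / 4 = p / 2 := by omega
    rw [this]
    exact (ZMod.euler_criterion p hh0).mp hsq
  have hne11 : (-1 : ZMod p) ≠ 1 := by
    intro he
    have h2 : ((2:ℕ) : ZMod p) = 0 := by push_cast; linear_combination -he
    have hd := (ZMod.natCast_eq_zero_iff 2 p).mp h2
    have := Nat.le_of_dvd (by norm_num) hd
    omega
  -- quartic iff u = 1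
  have hq_iff : (∃ x : (ZMod p)ˣ, ((x : ZMod p)) ^ 4 = (h : ZMod p)) ↔ u = 1 := by
    have hc4 : 4 * ((p - 1) / 4) = p - 1 := by omega
    constructor
    · rintro ⟨x, hx⟩
      rw [hu, ← hx, ← pow_mul, hc4]
      exact ZMod.pow_card_sub_one_eq_one (Units.ne_zero x)
    · intro h1
      set hunit : (ZMod p)ˣ := ZMod.unitOfCoprime h hcoph with hhu
      have hval : ((hunit : (ZMod p)ˣ) : ZMod p) = ((h:ℕ) : ZMod p) :=
        ZMod.coe_unitOfCoprime h hcoph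
      have : hunit ^ ((p - 1) / 4) = 1 := by
        ext
        push_cast [hval]
        rw [← hu, h1]
      obtain ⟨x, hx⟩ := (quartic_iff p h4 hunit).mpr this
      refine ⟨x, ?_⟩
      have := congrArg (Units.val) hx
      push_cast at this
      rw [hval] at this
      exact_mod_cast this
  rcases mul_self_eq_one_iff.mp hu2 with h1 | h1
  · -- u = 1 : h is quartic, τ is even
    have heven : Even τ := by
      rw [hE2u, h1, one_pow, mul_one] at hmain
      by_contra hodd
      rw [Nat.not_even_iff_odd] at hodd
      rw [hodd.neg_one_pow] at hmain
      exact hne11 hmain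
    exact ⟨fun _ => heven, fun hn => absurd (hq_iff.mpr h1) hn⟩
  · -- u = -1 : h is not quartic, τ is odd
    have hodd : Odd τ := by
      rw [hE2u, h1, hkodd.neg_one_pow] at hmain
      by_contra hev
      rw [Nat.not_odd_iff_even] at hev
      rw [hev.neg_one_pow, one_mul] at hmain
      exact hne11 hmain
    have hnq : ¬ (∃ x : (ZMod p)ˣ, ((x : ZMod p)) ^ 4 = (h : ZMod p)) := by
      intro hq
      have := hq_iff.mp hq
      rw [h1] at this
      exact hne11 this
    exact ⟨fun hq => absurd hq hnq, fun _ => hodd⟩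
end

section
/- Let p ≡ 1 (mod 4) be prime, K = kp odd, gcd(h,K) = 1, and h a quadratic nonresidue mod p. Then τ_er(h,K) + τ_es(h,K) ≡ 1 (mod 2), where τ_er and τ_es count even μ ∈ (0,K) coprime to p that are quadratic residues (resp. nonresidues) mod p with least residue {hμ}_K odd. -/
/-!
An even `μ = 2ν ∈ (0, K)` has `{hμ}_K` odd exactly when `{hν}_K > K / 2`, so `τ_er + τ_es` is the
number `m` of `ν ∈ (0, K / 2]` prime to `p` for which `hν` has a negative least absolute residue
modulo `K`. Taking absolute values of these residues permutes those `ν`, and comparing the two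
products modulo `p` gives Gauss's identity `h ^ (k (p - 1) / 2) ≡ (-1) ^ m (mod p)`. The left side
is `-1` by Euler's criterion, since `h` is a nonresidue and `k` is odd; hence `m` is odd.
-/

open scoped Classical

/-- `τ_es(h,K)`: even `μ ∈ (0,K)`, coprime to `p`, quadratic nonresidues mod `p`,
with `{hμ}_K` odd. -/
noncomputable def tauES (p K h : ℕ) : ℕ :=
  ((Finset.Ioo 0 K).filter (fun μ =>
    ¬ p ∣ μ ∧ 2 ∣ μ ∧ ¬ IsSquare (μ : ZMod p) ∧ Odd (h * μ % K))).card

open Finset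

lemma ZMod.pow_div_two_eq_neg_one_of_not_isSquare {p : ℕ} [Fact p.Prime] {a : ZMod p}
    (ha : ¬ IsSquare a) : a ^ (p / 2) = -1 := by
  have ha0 : a ≠ 0 := by
    rintro rfl
    exact ha IsSquare.zero
  exact (ZMod.pow_div_two_eq_neg_one_or_one p ha0).resolve_left
    fun h1 => ha ((ZMod.euler_criterion p ha0).mpr h1)

def absMinResidue (n x : ℕ) : ℕ := (x : ZMod n).valMinAbs.natAbs

section AbsMinResidue

variable {n p a : ℕ}

lemma natCast_absMinResidue_of_dvd [NeZero n] (hpn : p ∣ n) (x : ℕ) :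
    (absMinResidue n x : ZMod p) = if x % n ≤ n / 2 then (x : ZMod p) else -(x : ZMod p) := by
  have := congrArg (ZMod.castHom hpn (ZMod p)) (ZMod.natCast_natAbs_valMinAbs (x : ZMod n))
  rw [ZMod.val_natCast, apply_ite (ZMod.castHom hpn (ZMod p)), map_neg] at this
  simpa [absMinResidue] using this

lemma absMinResidue_mul_injOn (ha : a.Coprime n) :
    Set.InjOn (fun ν => absMinResidue n (a * ν)) (Ioc 0 (n / 2) : Finset ℕ) := by
  intro ν₁ hν₁ ν₂ hν₂ he
  obtain ⟨h₁, h₁'⟩ := mem_Ioc.mp hν₁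
  obtain ⟨h₂, h₂'⟩ := mem_Ioc.mp hν₂
  have hu : IsUnit (a : ZMod n) := (ZMod.isUnit_iff_coprime a n).mpr ha
  simp only [absMinResidue, Nat.cast_mul, ZMod.natAbs_valMinAbs_eq_natAbs_valMinAbs, ← mul_neg,
    hu.mul_right_inj] at he
  rcases he with he | he
  · rwa [ZMod.natCast_eq_natCast_iff', Nat.mod_eq_of_lt (by omega),
      Nat.mod_eq_of_lt (by omega)] at he
  · rw [eq_neg_iff_add_eq_zero, ← Nat.cast_add, ZMod.natCast_eq_zero_iff] at he
    have := Nat.le_of_dvd (by omega) he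
    omega

variable [Fact p.Prime]

lemma absMinResidue_mul_mem (hpn : p ∣ n) (ha : a.Coprime n) {ν : ℕ}
    (hν : ν ∈ ({ν ∈ Ioc 0 (n / 2) | ¬ p ∣ ν} : Finset ℕ)) :
    absMinResidue n (a * ν) ∈ ({ν ∈ Ioc 0 (n / 2) | ¬ p ∣ ν} : Finset ℕ) := by
  obtain ⟨hν, hpν⟩ := mem_filter.mp hν
  have : NeZero n := ⟨by rw [mem_Ioc] at hν; omega⟩
  have hpa : ¬ p ∣ a :=
    (Nat.Prime.coprime_iff_not_dvd Fact.out).mp (ha.coprime_dvd_right hpn).symm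
  have haν : ((a * ν : ℕ) : ZMod p) ≠ 0 := by
    rw [Ne, ZMod.natCast_eq_zero_iff, (Fact.out : p.Prime).dvd_mul]
    tauto
  have hpr : ¬ p ∣ absMinResidue n (a * ν) := by
    rw [← ZMod.natCast_eq_zero_iff, natCast_absMinResidue_of_dvd hpn]
    split_ifs <;> simpa using haν
  refine mem_filter.mpr ⟨mem_Ioc.mpr ⟨Nat.pos_of_ne_zero ?_, ZMod.natAbs_valMinAbs_le _⟩, hpr⟩
  rintro h0
  exact hpr (h0 ▸ dvd_zero p)

lemma image_absMinResidue_mul (hpn : p ∣ n) (ha : a.Coprime n) :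
    ({ν ∈ Ioc 0 (n / 2) | ¬ p ∣ ν} : Finset ℕ).image (fun ν => absMinResidue n (a * ν)) =
      {ν ∈ Ioc 0 (n / 2) | ¬ p ∣ ν} := by
  refine eq_of_subset_of_card_le
    (image_subset_iff.mpr fun ν hν => absMinResidue_mul_mem hpn ha hν) ?_
  rw [card_image_of_injOn
    ((absMinResidue_mul_injOn ha).mono (coe_subset.mpr (filter_subset _ _)))]

end AbsMinResidue

theorem gauss_lemma_of_dvd {n p a : ℕ} [Fact p.Prime] (hpn : p ∣ n) (ha : a.Coprime n) :
    (a : ZMod p) ^ #{ν ∈ Ioc 0 (n / 2) | ¬ p ∣ ν} =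
      (-1) ^ #{ν ∈ Ioc 0 (n / 2) | ¬ p ∣ ν ∧ n / 2 < a * ν % n} := by
  rcases eq_zero_or_neZero n with rfl | _
  · simp
  have himage := image_absMinResidue_mul hpn ha
  have hinj := (absMinResidue_mul_injOn ha).mono
    (coe_subset.mpr (filter_subset (fun ν => ¬ p ∣ ν) _))
  set H : Finset ℕ := {ν ∈ Ioc 0 (n / 2) | ¬ p ∣ ν}
  set m := #{ν ∈ Ioc 0 (n / 2) | ¬ p ∣ ν ∧ n / 2 < a * ν % n}
  have hm : #{ν ∈ H | ¬ a * ν % n ≤ n / 2} = m := by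
    simp only [H, filter_filter, not_le]
    rfl
  have hP : ∏ ν ∈ H, (ν : ZMod p) ≠ 0 :=
    prod_ne_zero_iff.mpr fun ν hν => by
      rw [Ne, ZMod.natCast_eq_zero_iff]
      exact (mem_filter.mp hν).2
  have key : ∏ ν ∈ H, (ν : ZMod p) = (-1) ^ m * (a : ZMod p) ^ #H * ∏ ν ∈ H, (ν : ZMod p) :=
    calc ∏ ν ∈ H, (ν : ZMod p)
        = ∏ ν ∈ H, (absMinResidue n (a * ν) : ZMod p) := by
          rw [← prod_image (f := fun x : ℕ => (x : ZMod p)) hinj, himage]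
      _ = ∏ ν ∈ H,
            if a * ν % n ≤ n / 2 then ((a * ν : ℕ) : ZMod p) else -((a * ν : ℕ) : ZMod p) :=
          prod_congr rfl fun ν _ => natCast_absMinResidue_of_dvd hpn _
      _ = (-1) ^ m * ∏ ν ∈ H, ((a * ν : ℕ) : ZMod p) := by
          rw [prod_ite, prod_neg, hm, mul_left_comm, prod_filter_mul_prod_filter_not]
      _ = (-1) ^ m * (a : ZMod p) ^ #H * ∏ ν ∈ H, (ν : ZMod p) := by
          simp only [Nat.cast_mul, prod_mul_distrib, prod_const, mul_assoc]
  have hone : (-1) ^ m * (a : ZMod p) ^ #H = 1 :=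
    mul_right_cancel₀ hP (by rw [one_mul]; exact key.symm)
  calc (a : ZMod p) ^ #H = (-1) ^ m * ((-1) ^ m * (a : ZMod p) ^ #H) := by
        rw [← mul_assoc, ← mul_pow, neg_one_mul, neg_neg, one_pow, one_mul]
    _ = (-1) ^ m := by rw [hone, mul_one]

lemma odd_two_mul_mod_iff {K : ℕ} (hK : Odd K) (x : ℕ) : Odd (2 * x % K) ↔ K / 2 < x % K := by
  have hr := Nat.mod_lt x hK.pos
  have hK2 := Nat.odd_iff.mp hK
  rw [← Nat.mul_mod_mod, Nat.odd_iff]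
  by_cases h2 : 2 * (x % K) < K
  · rw [Nat.mod_eq_of_lt h2]
    omega
  · rw [Nat.mod_eq_sub_mod (not_lt.mp h2), Nat.mod_eq_of_lt (show 2 * (x % K) - K < K by omega)]
    omega

lemma card_filter_even_odd_mul_mod {p K : ℕ} (hK : Odd K) (hp : Odd p) (h : ℕ) :
    #{μ ∈ Ioo 0 K | ¬ p ∣ μ ∧ 2 ∣ μ ∧ Odd (h * μ % K)} =
      #{ν ∈ Ioc 0 (K / 2) | ¬ p ∣ ν ∧ K / 2 < h * ν % K} := by
  have hp2 : ∀ ν, p ∣ 2 * ν ↔ p ∣ ν := fun ν =>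
    (Nat.coprime_two_right.mpr hp).dvd_mul_left
  have hK2 := Nat.odd_iff.mp hK
  have hodd : ∀ ν, Odd (h * (2 * ν) % K) ↔ K / 2 < h * ν % K := fun ν => by
    rw [mul_left_comm, odd_two_mul_mod_iff hK]
  refine card_nbij' (· / 2) (2 * ·) ?_ ?_ ?_ ?_
  · intro μ hμ
    simp only [coe_filter, mem_Ioo, mem_Ioc, Set.mem_ofPred_eq] at hμ ⊢
    obtain ⟨⟨hμ0, hμK⟩, hpμ, ⟨ν, rfl⟩, hw⟩ := hμ
    rw [Nat.mul_div_cancel_left ν two_pos, ← hp2, ← hodd]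
    exact ⟨⟨by omega, by omega⟩, hpμ, hw⟩
  · intro ν hν
    simp only [coe_filter, mem_Ioo, mem_Ioc, Set.mem_ofPred_eq] at hν ⊢
    obtain ⟨⟨hν0, hνK⟩, hpν, hw⟩ := hν
    rw [hp2, hodd]
    exact ⟨⟨by omega, by omega⟩, hpν, dvd_mul_right 2 ν, hw⟩
  · intro μ hμ
    simp only [coe_filter, Set.mem_ofPred_eq] at hμ
    exact Nat.mul_div_cancel' hμ.2.2.1
  · intro ν _
    exact Nat.mul_div_cancel_left ν two_pos

lemma card_filter_not_dvd_Ioc_half {k p : ℕ} (hk : Odd k) (hp : Odd p) :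
    #{ν ∈ Ioc 0 (k * p / 2) | ¬ p ∣ ν} = k * (p / 2) := by
  obtain ⟨a, rfl⟩ := hk
  obtain ⟨b, rfl⟩ := hp
  have hhalf : (2 * a + 1) * (2 * b + 1) / 2 = a * (2 * b + 1) + b := by
    rw [show (2 * a + 1) * (2 * b + 1) = 2 * (a * (2 * b + 1) + b) + 1 by ring]
    omega
  have hdvd : #{ν ∈ Ioc 0 (a * (2 * b + 1) + b) | 2 * b + 1 ∣ ν} = a := by
    rw [Nat.Ioc_filter_dvd_card_eq_div]
    exact Nat.div_eq_of_lt_le (Nat.le_add_right _ _) (by rw [add_mul, one_mul]; omega)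
  have hsplit := card_filter_add_card_filter_not (s := Ioc 0 (a * (2 * b + 1) + b))
    (fun ν => 2 * b + 1 ∣ ν)
  rw [hhalf, show (2 * b + 1) / 2 = b by omega]
  rw [hdvd, Nat.card_Ioc, Nat.sub_zero] at hsplit
  have : (2 * a + 1) * b + a = a * (2 * b + 1) + b := by ring
  omega

lemma tauER_add_tauES (p K h : ℕ) :
    tauER p K h + tauES p K h = #{μ ∈ Ioo 0 K | ¬ p ∣ μ ∧ 2 ∣ μ ∧ Odd (h * μ % K)} := by
  rw [← card_filter_add_card_filter_not (fun μ : ℕ => IsSquare (μ : ZMod p)), tauER, tauES,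
    filter_filter, filter_filter]
  congr 2 <;> ext μ <;> simp only [mem_filter] <;> tauto

theorem tauER_add_tauES_odd_general (p k h : ℕ) [Fact p.Prime]
    (hK : Odd (k * p)) (hcop : Nat.gcd h (k * p) = 1)
    (hns : ¬ IsSquare (h : ZMod p)) :
    Odd (tauER p (k * p) h + tauES p (k * p) h) := by
  obtain ⟨hk, hp⟩ := Nat.odd_mul.mp hK
  have : Fact (2 < p) := ⟨(Fact.out : p.Prime).two_le.lt_of_ne <| by
    rintro rfl
    exact Nat.not_odd_iff_even.mpr even_two hp⟩
  have hgauss := gauss_lemma_of_dvd (dvd_mul_left p k) hcop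
  rw [card_filter_not_dvd_Ioc_half hk hp, pow_mul',
    ZMod.pow_div_two_eq_neg_one_of_not_isSquare hns, hk.neg_one_pow, eq_comm,
    neg_one_pow_eq_neg_one_iff_odd ZMod.neg_one_ne_one] at hgauss
  rwa [tauER_add_tauES, card_filter_even_odd_mul_mod hK hp]

theorem tauER_add_tauES_odd (p k h : ℕ) [Fact p.Prime] (h4 : p % 4 = 1)
    (hK : Odd (k * p)) (hcop : Nat.gcd h (k * p) = 1)
    (hns : ¬ IsSquare (h : ZMod p)) :
    Odd (tauER p (k * p) h + tauES p (k * p) h) :=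
  tauER_add_tauES_odd_general p k h hK hcop hns
end

section
/- Let p ≡ 1 (mod 4) be prime, K = kp odd, gcd(h,K) = 1. Then τ_os(h,K) ≡ (p−1)/4 + τ_es(h,K) (mod 2), where τ_os counts odd μ ∈ (0,K) coprime to p that are nonresidues mod p with {hμ}_K odd, and τ_es counts the corresponding even μ. -/
/-!
Both counts live in the set `N` of quadratic nonresidues `μ ∈ (0, K)` modulo `p`, and
`τ_os + τ_es` counts the `μ ∈ N` with `{hμ}_K` odd. As `-1` is a square mod `p`, the
reflection `μ ↦ K - μ` preserves `N`; as `{h(K - μ)}_K + {hμ}_K = K` is odd, it swaps the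
parity of `{hμ}_K`. Hence `τ_os + τ_es = |N| / 2 = k (p - 1) / 4`, and `k` is odd.
-/

open scoped Classical

/-- `τ_os(h,K)`: odd `μ ∈ (0,K)`, coprime to `p`, quadratic nonresidues mod `p`,
with `{hμ}_K` odd. -/
noncomputable def tauOS (p K h : ℕ) : ℕ :=
  ((Finset.Ioo 0 K).filter (fun μ =>
    ¬ p ∣ μ ∧ Odd μ ∧ ¬ IsSquare (μ : ZMod p) ∧ Odd (h * μ % K))).card

open Finset

theorem Nat.mod_add_mod_eq_of_dvd_add {a b K : ℕ} (hab : K ∣ a + b) (hb : ¬K ∣ b) :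
    a % K + b % K = K := by
  have hK : K ≠ 0 := by rintro rfl; simp_all
  have hbK : b % K ≠ 0 := fun h => hb (Nat.dvd_of_mod_eq_zero h)
  refine Nat.eq_of_dvd_of_lt_two_mul (by omega) ?_ ?_
  · rw [Nat.dvd_iff_mod_eq_zero, ← Nat.add_mod]
    exact Nat.mod_eq_zero_of_dvd hab
  · have := Nat.mod_lt a (Nat.pos_of_ne_zero hK)
    have := Nat.mod_lt b (Nat.pos_of_ne_zero hK)
    omega

theorem Nat.mul_sub_mod_add_mul_mod {h K μ : ℕ} (hcop : h.Coprime K) (hμ : μ ∈ Ioo 0 K) :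
    h * (K - μ) % K + h * μ % K = K := by
  obtain ⟨hμ0, hμK⟩ := mem_Ioo.mp hμ
  refine Nat.mod_add_mod_eq_of_dvd_add ⟨h, ?_⟩ fun hdvd => ?_
  · rw [← Nat.mul_add, Nat.sub_add_cancel hμK.le, Nat.mul_comm]
  · exact absurd (Nat.le_of_dvd hμ0 (hcop.symm.dvd_of_dvd_mul_left hdvd)) (by omega)

theorem card_filter_odd_mul_mod_eq {h K : ℕ} (hK : Odd K) (hcop : h.Coprime K) {s : Finset ℕ}
    (hs : s ⊆ Ioo 0 K) (hrefl : ∀ μ ∈ s, K - μ ∈ s) :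
    #{μ ∈ s | Odd (h * μ % K)} = #{μ ∈ s | ¬Odd (h * μ % K)} := by
  have hswap (μ) (hμ : μ ∈ s) : Odd (h * (K - μ) % K) ↔ ¬Odd (h * μ % K) := by
    rw [Nat.not_odd_iff_even, ← Nat.odd_add, Nat.mul_sub_mod_add_mul_mod hcop (hs hμ)]
    exact hK
  have hinv (μ) (hμ : μ ∈ s) : K - (K - μ) = μ := Nat.sub_sub_self (mem_Ioo.mp (hs hμ)).2.le
  refine card_nbij' (K - ·) (K - ·) ?_ ?_ ?_ ?_ <;> intro μ hμ <;>
    simp only [coe_filter, Set.mem_ofPred_eq] at hμ ⊢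
  · exact ⟨hrefl μ hμ.1, (hswap μ hμ.1).not.mpr (not_not.mpr hμ.2)⟩
  · exact ⟨hrefl μ hμ.1, (hswap μ hμ.1).mpr hμ.2⟩
  · exact hinv μ hμ.1
  · exact hinv μ hμ.1

theorem FiniteField.two_mul_card_nonsquares {F : Type*} [Field F] [Fintype F]
    (hF : ringChar F ≠ 2) : 2 * #{a : F | ¬IsSquare a} = Fintype.card F - 1 := by
  have hχ (a : F) : (quadraticChar F a : ℤ) =
      (if a = 0 then 0 else 1) - 2 * (if ¬IsSquare a then 1 else 0) := by
    rw [quadraticChar_apply, quadraticCharFun]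
    by_cases ha : a = 0
    · simp [ha]
    · by_cases hs : IsSquare a <;> simp [ha, hs]
  have hsum := quadraticChar_sum_zero hF
  simp only [hχ, sum_sub_distrib, ← mul_sum, sum_boole, sum_ite, sum_const_zero, zero_add,
    sum_const, nsmul_eq_mul, mul_one] at hsum
  rw [filter_ne', card_erase_of_mem (mem_univ _), card_univ] at hsum
  have := Fintype.card_pos (α := F)
  omega

theorem Nat.count_natCast_zmod_mul {n : ℕ} [NeZero n] (Q : ZMod n → Prop) [DecidablePred Q]
    (k : ℕ) : Nat.count (fun μ => Q μ) (k * n) = k * #{a : ZMod n | Q a} := by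
  have hbase : Nat.count (fun μ => Q μ) n = #{a : ZMod n | Q a} := by
    rw [Nat.count_eq_card_filter_range]
    refine card_bij (fun μ _ => (μ : ZMod n)) ?_ ?_ ?_
    · intro μ hμ
      simpa using (mem_filter.mp hμ).2
    · intro μ hμ ν hν h
      simp only [mem_filter, mem_range] at hμ hν
      rwa [ZMod.natCast_eq_natCast_iff', Nat.mod_eq_of_lt hμ.1, Nat.mod_eq_of_lt hν.1] at h
    · intro a ha
      exact ⟨a.val, by simpa [ZMod.val_lt] using ha, ZMod.natCast_zmod_val a⟩
  induction k with
  | zero => simp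
  | succ k ih =>
    have hshift (j : ℕ) : ((k * n + j : ℕ) : ZMod n) = j := by simp
    simp only [add_mul, one_mul, Nat.count_add, ih, hshift, hbase]

noncomputable def nonresidues (p K : ℕ) : Finset ℕ :=
  {μ ∈ Ioo 0 K | ¬IsSquare (μ : ZMod p)}

theorem not_dvd_of_mem_nonresidues {p K μ : ℕ} (hμ : μ ∈ nonresidues p K) : ¬p ∣ μ := by
  intro hdvd
  rw [nonresidues, mem_filter, (ZMod.natCast_eq_zero_iff μ p).mpr hdvd] at hμ
  exact hμ.2 IsSquare.zero

theorem tauOS_add_tauES (p K h : ℕ) :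
    tauOS p K h + tauES p K h = #{μ ∈ nonresidues p K | Odd (h * μ % K)} := by
  rw [← card_filter_add_card_filter_not (p := fun μ => Odd μ), filter_filter, filter_filter,
    tauOS, tauES]
  congr 2 <;> ext μ <;> have := @not_dvd_of_mem_nonresidues p K μ <;>
    simp only [nonresidues, mem_filter, Nat.not_odd_iff_even, even_iff_two_dvd] at this ⊢ <;>
    tauto

theorem sub_mem_nonresidues {p K μ : ℕ} (hneg : IsSquare (-1 : ZMod p)) (hpK : p ∣ K)
    (hμ : μ ∈ nonresidues p K) : K - μ ∈ nonresidues p K := by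
  simp only [nonresidues, mem_filter, mem_Ioo] at hμ ⊢
  refine ⟨by omega, fun hsq => hμ.2 ?_⟩
  rw [Nat.cast_sub hμ.1.2.le, (ZMod.natCast_eq_zero_iff K p).mpr hpK, zero_sub] at hsq
  simpa using hneg.mul hsq

theorem two_mul_card_nonresidues (p k : ℕ) [Fact p.Prime] (hp : p ≠ 2) :
    2 * #(nonresidues p (k * p)) = k * (p - 1) := by
  have hrange : nonresidues p (k * p) = {μ ∈ range (k * p) | ¬IsSquare ((μ : ℕ) : ZMod p)} := by
    ext μ
    simp only [nonresidues, mem_filter, mem_Ioo, mem_range]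
    refine ⟨fun h => ⟨h.1.2, h.2⟩, fun h => ⟨⟨Nat.pos_of_ne_zero ?_, h.1⟩, h.2⟩⟩
    rintro rfl
    exact h.2 (by simp)
  rw [hrange, ← Nat.count_eq_card_filter_range,
    Nat.count_natCast_zmod_mul fun a : ZMod p => ¬IsSquare a, Nat.mul_left_comm]
  congr 1
  convert FiniteField.two_mul_card_nonsquares (F := ZMod p) (by rwa [ZMod.ringChar_zmod_n])
  exact (ZMod.card p).symm

theorem two_mul_card_nonresidues_filter_odd_mul_mod {p K h : ℕ} (hK : Odd K)
    (hcop : h.Coprime K) (hneg : IsSquare (-1 : ZMod p)) (hpK : p ∣ K) :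
    2 * #{μ ∈ nonresidues p K | Odd (h * μ % K)} = #(nonresidues p K) := by
  conv_rhs => rw [← card_filter_add_card_filter_not (p := fun μ => Odd (h * μ % K))]
  rw [← card_filter_odd_mul_mod_eq (s := nonresidues p K) hK hcop (filter_subset _ _)
    fun μ hμ => sub_mem_nonresidues hneg hpK hμ, two_mul]

theorem tauOS_mod_two (p k h : ℕ) [Fact p.Prime] (h4 : p % 4 = 1)
    (hK : Odd (k * p)) (hcop : Nat.gcd h (k * p) = 1) :
    tauOS p (k * p) h % 2 = ((p - 1) / 4 + tauES p (k * p) h) % 2 := by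
  have hneg : IsSquare (-1 : ZMod p) := ZMod.exists_sq_eq_neg_one_iff.mpr (by omega)
  have hsum := tauOS_add_tauES p (k * p) h
  have hhalf := two_mul_card_nonresidues_filter_odd_mul_mod hK hcop hneg (dvd_mul_left p k)
  have hcard := two_mul_card_nonresidues p k (by omega)
  obtain ⟨q, hq⟩ : ∃ q, p - 1 = 4 * q := ⟨(p - 1) / 4, by omega⟩
  have hS : tauOS p (k * p) h + tauES p (k * p) h = k * q := by
    rw [hq] at hcard
    linarith
  have hk : k % 2 = 1 := Nat.odd_iff.mp (Nat.odd_mul.mp hK).1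
  have hkq : k * q % 2 = q % 2 := by rw [Nat.mul_mod, hk, one_mul, Nat.mod_mod]
  omega
end
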